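/- arXiv:1805.01133 — 10 statements merged into one kernel-verified Lean document; each statement's English description precedes it below -/
import Mathlib

section
/- For every x > 0, one has x^{−2}·(1 − x/(eˣ − 1)) = ∫₀^∞ e^{−ux}·(u − ⌊u⌋) du, where ⌊u⌋ denotes the integer part of u. In particular the function x ↦ x^{−2}(1 − x/(eˣ−1)) is completely monotone on (0,∞). -/
/-!
Write `F` for the Laplace transform of the fractional part. Since `Int.fract` is 1-periodic,
translating the integral over `(1, ∞)` back to `(0, ∞)` gives
`F x = ∫₀¹ u e^{-ux} du + e^{-x} F x`, and the elementary integral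
`∫₀¹ u e^{-ux} du = (1 - (1 + x) e^{-x}) / x²` yields the closed form.
Differentiating under the integral sign,
`(-1)ⁿ F⁽ⁿ⁾ x = ∫₀^∞ uⁿ e^{-ux} fract u du ≥ 0`.
-/

open MeasureTheory Set Filter Real Topology

noncomputable def laplace (f : ℝ → ℝ) (x : ℝ) : ℝ :=
  ∫ u in Ioi 0, exp (-u * x) * f u

def CompletelyMonotoneOn (f : ℝ → ℝ) (s : Set ℝ) : Prop :=
  ∀ n : ℕ, ∀ x ∈ s, 0 ≤ (-1) ^ n * iteratedDeriv n f x

theorem CompletelyMonotoneOn.congr {f g : ℝ → ℝ} {s : Set ℝ} (hf : CompletelyMonotoneOn f s)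
    (hs : IsOpen s) (hfg : EqOn f g s) : CompletelyMonotoneOn g s := by
  intro n x hx
  rw [← (hfg.eventuallyEq_of_mem (hs.mem_nhds hx)).iteratedDeriv_eq n]
  exact hf n x hx

theorem integrableOn_pow_mul_exp_neg_mul (n : ℕ) {x : ℝ} (hx : 0 < x) :
    IntegrableOn (fun u : ℝ => u ^ n * exp (-u * x)) (Ioi 0) := by
  refine (integrableOn_rpow_mul_exp_neg_mul_rpow (s := n)
    (neg_one_lt_zero.trans_le n.cast_nonneg) one_pos hx).congr_fun
    (fun u _ => ?_) measurableSet_Ioi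
  simp [mul_comm]

section Laplace

variable {f : ℝ → ℝ} {C x : ℝ}

theorem integrableOn_exp_neg_mul_mul_pow_mul
    (hf : AEStronglyMeasurable f (volume.restrict (Ioi 0)))
    (hfC : ∀ᵐ u ∂volume.restrict (Ioi 0), ‖f u‖ ≤ C) (n : ℕ) (hx : 0 < x) :
    IntegrableOn (fun u => exp (-u * x) * (u ^ n * f u)) (Ioi 0) :=
  ((integrableOn_pow_mul_exp_neg_mul n hx).mul_bdd hf hfC).congr (ae_of_all _ fun u => by ring)

theorem hasDerivAt_laplace_pow_mul
    (hf : AEStronglyMeasurable f (volume.restrict (Ioi 0)))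
    (hfC : ∀ᵐ u ∂volume.restrict (Ioi 0), ‖f u‖ ≤ C) (n : ℕ) (hx : 0 < x) :
    HasDerivAt (laplace fun u => u ^ n * f u)
      (-laplace (fun u => u ^ (n + 1) * f u) x) x := by
  have hmeas : ∀ (k : ℕ) y, AEStronglyMeasurable (fun u => exp (-u * y) * (u ^ k * f u))
      (volume.restrict (Ioi 0)) := fun k y =>
    (Continuous.aestronglyMeasurable (by fun_prop)).mul
      ((Continuous.aestronglyMeasurable (by fun_prop)).mul hf)
  have hderiv : ∀ u y, HasDerivAt (fun y => exp (-u * y) * (u ^ n * f u))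
      (-(exp (-u * y) * (u ^ (n + 1) * f u))) y := fun u y => by
    have hlin : HasDerivAt (fun y => -u * y) (-u) y := by
      simpa using (hasDerivAt_id y).const_mul (-u)
    exact (hlin.exp.mul_const (u ^ n * f u)).congr_deriv (by ring)
  -- on the ball of radius x/2 around x, every derivative is dominated at the decay rate x/2
  have hbound : ∀ᵐ u ∂volume.restrict (Ioi 0), ∀ y ∈ Metric.ball x (x / 2),
      ‖-(exp (-u * y) * (u ^ (n + 1) * f u))‖ ≤ exp (-u * (x / 2)) * (u ^ (n + 1) * C) := by
    filter_upwards [hfC, ae_restrict_mem measurableSet_Ioi] with u hfu hu y hy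
    rw [Metric.mem_ball, Real.dist_eq, abs_lt] at hy
    have hu0 : (0 : ℝ) ≤ u := le_of_lt hu
    rw [norm_neg, norm_mul, norm_mul, norm_of_nonneg (exp_pos _).le,
      norm_of_nonneg (by positivity : (0 : ℝ) ≤ u ^ (n + 1))]
    have hexp : exp (-u * y) ≤ exp (-u * (x / 2)) := exp_le_exp.2 (by nlinarith)
    have hpow : (0 : ℝ) ≤ u ^ (n + 1) := by positivity
    exact mul_le_mul hexp (mul_le_mul_of_nonneg_left hfu hpow) (by positivity) (exp_pos _).le
  have hbound_int : IntegrableOn (fun u => exp (-u * (x / 2)) * (u ^ (n + 1) * C)) (Ioi 0) :=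
    ((integrableOn_pow_mul_exp_neg_mul (n + 1) (half_pos hx)).mul_const C).congr
      (ae_of_all _ fun u => by ring)
  have h := (hasDerivAt_integral_of_dominated_loc_of_deriv_le
    (Metric.ball_mem_nhds x (half_pos hx)) (Eventually.of_forall (hmeas n))
    (integrableOn_exp_neg_mul_mul_pow_mul hf hfC n hx) (hmeas (n + 1) x).neg hbound hbound_int
    (ae_of_all _ fun u y _ => hderiv u y)).2
  rwa [integral_neg] at h

theorem iteratedDeriv_laplace_pow_mul
    (hf : AEStronglyMeasurable f (volume.restrict (Ioi 0)))
    (hfC : ∀ᵐ u ∂volume.restrict (Ioi 0), ‖f u‖ ≤ C) (n m : ℕ) (hx : 0 < x) :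
    iteratedDeriv n (laplace fun u => u ^ m * f u) x =
      (-1) ^ n * laplace (fun u => u ^ (m + n) * f u) x := by
  induction n generalizing m x with
  | zero => simp
  | succ k ih =>
    have hderiv : deriv (laplace fun u => u ^ m * f u) =ᶠ[𝓝 x]
        fun y => -laplace (fun u => u ^ (m + 1) * f u) y := by
      filter_upwards [isOpen_Ioi.mem_nhds hx] with y hy
      exact (hasDerivAt_laplace_pow_mul hf hfC m hy).deriv
    rw [iteratedDeriv_succ', hderiv.iteratedDeriv_eq k, iteratedDeriv_fun_neg, ih (m + 1) hx,
      add_right_comm, add_assoc, pow_succ]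
    ring

theorem completelyMonotoneOn_laplace
    (hf : AEStronglyMeasurable f (volume.restrict (Ioi 0)))
    (hfC : ∀ᵐ u ∂volume.restrict (Ioi 0), ‖f u‖ ≤ C)
    (hf0 : ∀ᵐ u ∂volume.restrict (Ioi 0), 0 ≤ f u) :
    CompletelyMonotoneOn (laplace f) (Ioi 0) := by
  intro n x hx
  have h := iteratedDeriv_laplace_pow_mul hf hfC n 0 hx
  simp only [pow_zero, one_mul, zero_add] at h
  rw [h, ← mul_assoc, ← mul_pow, neg_one_mul, neg_neg, one_pow, one_mul]
  refine integral_nonneg_of_ae ?_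
  filter_upwards [hf0, ae_restrict_mem measurableSet_Ioi] with u hfu hu
  have : (0 : ℝ) ≤ u := le_of_lt hu
  positivity

theorem setIntegral_Ioi_exp_neg_mul_mul_of_periodic {c : ℝ} (hf : Function.Periodic f c) :
    ∫ u in Ioi c, exp (-u * x) * f u = exp (-c * x) * laplace f x := by
  have hshift := (measurePreserving_add_right volume c).setIntegral_preimage_emb
    (measurableEmbedding_addRight c) (fun u => exp (-u * x) * f u) (Ioi c)
  rw [preimage_add_const_Ioi, sub_self] at hshift
  rw [← hshift, laplace, ← integral_const_mul]
  refine integral_congr_ae (ae_of_all _ fun u => ?_)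
  simp only [hf u, neg_add, add_mul, exp_add]
  ring

theorem laplace_of_periodic {c : ℝ} (hf : Function.Periodic f c) (hc : 0 < c) (hx : 0 < x)
    (hint : IntegrableOn (fun u => exp (-u * x) * f u) (Ioi 0)) :
    laplace f x = (∫ u in (0 : ℝ)..c, exp (-u * x) * f u) / (1 - exp (-c * x)) := by
  have hsplit := intervalIntegral.integral_interval_add_Ioi hint
    (hint.mono_set (Ioi_subset_Ioi hc.le))
  rw [setIntegral_Ioi_exp_neg_mul_mul_of_periodic hf] at hsplit
  have he : exp (-c * x) < 1 := exp_lt_one_iff.2 (by nlinarith)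
  rw [eq_div_iff (by linarith)]
  change _ = laplace f x at hsplit
  linarith

end Laplace

theorem norm_fract_le_one (u : ℝ) : ‖Int.fract u‖ ≤ 1 := by
  rw [norm_of_nonneg (Int.fract_nonneg u)]
  exact (Int.fract_lt_one u).le

theorem integrableOn_exp_neg_mul_mul_fract {x : ℝ} (hx : 0 < x) :
    IntegrableOn (fun u => exp (-u * x) * Int.fract u) (Ioi 0) := by
  simpa using integrableOn_exp_neg_mul_mul_pow_mul measurable_fract.aestronglyMeasurable
    (ae_of_all _ norm_fract_le_one) 0 hx

theorem integral_exp_neg_mul_mul_fract {x : ℝ} (hx : 0 < x) :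
    ∫ u in (0 : ℝ)..1, exp (-u * x) * Int.fract u = (1 - (1 + x) * exp (-x)) / x ^ 2 := by
  have hanti : ∀ u, HasDerivAt (fun u => -(exp (-u * x) * (u / x + 1 / x ^ 2)))
      (exp (-u * x) * u) u := fun u => by
    have hlin : HasDerivAt (fun u => -u * x) (-x) u := by
      simpa using (hasDerivAt_id u).neg.mul_const x
    refine (hlin.exp.mul (((hasDerivAt_id u).div_const x).add_const (1 / x ^ 2))).neg.congr_deriv ?_
    field_simp
    simp only [id]
    ring
  have hint : IntervalIntegrable (fun u => exp (-u * x) * Int.fract u) volume 0 1 :=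
    (intervalIntegrable_iff_integrableOn_Ioc_of_le zero_le_one).2
      ((integrableOn_exp_neg_mul_mul_fract hx).mono_set Ioc_subset_Ioi_self)
  rw [intervalIntegral.integral_eq_sub_of_hasDerivAt_of_le zero_le_one
    (f := fun u => -(exp (-u * x) * (u / x + 1 / x ^ 2)))
    (Continuous.continuousOn (by fun_prop)) (fun u hu => ?_) hint]
  · field_simp
    simp only [mul_zero, neg_zero, exp_zero]
    ring
  · rw [Int.fract_eq_self.2 ⟨hu.1.le, hu.2⟩]
    exact hanti u

theorem laplace_fract {x : ℝ} (hx : 0 < x) :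
    laplace Int.fract x = (1 - x / (exp x - 1)) / x ^ 2 := by
  rw [laplace_of_periodic Int.fract_add_one one_pos hx (integrableOn_exp_neg_mul_mul_fract hx),
    integral_exp_neg_mul_mul_fract hx, neg_one_mul]
  have hex : exp x - 1 ≠ 0 := (sub_pos.2 (one_lt_exp_iff.2 hx)).ne'
  rw [exp_neg]
  field_simp
  ring

/-- For every `x > 0`, `x⁻²(1 − x/(eˣ−1)) = ∫₀^∞ e^{−ux}(u − ⌊u⌋) du`;
in particular `x ↦ x⁻²(1 − x/(eˣ−1))` is completely monotone on `(0,∞)`. -/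
theorem frac_part_laplace_CM :
    (∀ x : ℝ, 0 < x →
      (1 - x / (Real.exp x - 1)) / x ^ 2 =
        ∫ u in Set.Ioi (0 : ℝ), Real.exp (-u * x) * (u - ⌊u⌋)) ∧
    (∀ (n : ℕ) (x : ℝ), 0 < x →
      0 ≤ (-1) ^ n *
        iteratedDeriv n (fun y : ℝ => (1 - y / (Real.exp y - 1)) / y ^ 2) x) := by
  refine ⟨fun x hx => (laplace_fract hx).symm, ?_⟩
  exact (completelyMonotoneOn_laplace measurable_fract.aestronglyMeasurable
    (ae_of_all _ norm_fract_le_one) (ae_of_all _ Int.fract_nonneg)).congr isOpen_Ioi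
    fun x hx => laplace_fract hx
end

section
/- The function h(x) = 1/x − 1/(eˣ − 1) is strictly decreasing on (0, ∞), with h(x) → 1/2 as x → 0+ and h(x) → 0 as x → ∞. -/
/-!
The derivative of `h x = 1/x - 1/(eˣ - 1)` is `eˣ/(eˣ - 1)² - 1/x²`, which is negative because
`eˣ - 1 = 2 sinh(x/2) e^{x/2}` and `|x/2| < |sinh(x/2)|` for `x ≠ 0`.
Near `0`, put `g x = (eˣ - 1 - x)/x²`; the Taylor bound for `exp` gives `g x → 1/2`, and
`eˣ - 1 = x (1 + x g x)` turns `h` into `g x / (1 + x g x) → 1/2`.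
At infinity both terms of `h` tend to `0`.
-/

open Set Filter Real Topology

namespace Real

lemma exp_sub_one_ne_zero {x : ℝ} (hx : x ≠ 0) : exp x - 1 ≠ 0 :=
  sub_ne_zero.mpr ((exp_eq_one_iff x).not.mpr hx)

lemma exp_sub_one_eq_two_mul_sinh_half_mul_exp_half (x : ℝ) :
    exp x - 1 = 2 * sinh (x / 2) * exp (x / 2) := by
  rw [sinh_eq, mul_div_cancel₀ _ two_ne_zero, sub_mul, ← exp_add, ← exp_add]
  norm_num

lemma sq_mul_exp_lt_sq_exp_sub_one {x : ℝ} (hx : x ≠ 0) :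
    x ^ 2 * exp x < (exp x - 1) ^ 2 := by
  have hsq : (x / 2) ^ 2 < sinh (x / 2) ^ 2 := by
    rw [sq_lt_sq, abs_sinh]
    exact self_lt_sinh_iff.mpr (by positivity)
  calc x ^ 2 * exp x = 4 * (x / 2) ^ 2 * exp (x / 2) ^ 2 := by
        rw [← exp_nat_mul]; ring_nf
    _ < 4 * sinh (x / 2) ^ 2 * exp (x / 2) ^ 2 := by gcongr
    _ = (exp x - 1) ^ 2 := by
        rw [exp_sub_one_eq_two_mul_sinh_half_mul_exp_half]; ring

lemma hasDerivAt_one_div_sub_one_div_exp_sub_one {x : ℝ} (hx : x ≠ 0) :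
    HasDerivAt (fun x : ℝ => 1 / x - 1 / (exp x - 1))
      (exp x / (exp x - 1) ^ 2 - 1 / x ^ 2) x := by
  have hinv := (hasDerivAt_const x (1 : ℝ)).div (hasDerivAt_id' x) hx
  have hexp := (hasDerivAt_const x (1 : ℝ)).div ((hasDerivAt_exp x).sub_const 1)
    (exp_sub_one_ne_zero hx)
  exact (hinv.sub hexp).congr_deriv (by ring)

lemma abs_exp_sub_one_sub_div_sq_sub_half_le {x : ℝ} (hx : |x| ≤ 1) (hx0 : x ≠ 0) :
    |(exp x - 1 - x) / x ^ 2 - 1 / 2| ≤ |x| := by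
  have h := exp_bound hx (n := 3) (by norm_num)
  norm_num [Finset.sum_range_succ, Nat.factorial] at h
  have hx2 : 0 < x ^ 2 := by positivity
  rw [show (exp x - 1 - x) / x ^ 2 - 1 / 2 = (exp x - (1 + x + x ^ 2 / 2)) / x ^ 2 by
    field_simp; ring, abs_div, abs_of_pos hx2, div_le_iff₀ hx2]
  calc |exp x - (1 + x + x ^ 2 / 2)| ≤ |x| ^ 3 * (4 / 18) := by convert h using 2; ring
    _ ≤ |x| * x ^ 2 := by rw [← sq_abs x]; nlinarith [abs_nonneg x, pow_pos (abs_pos.mpr hx0) 3]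

lemma tendsto_exp_sub_one_sub_div_sq :
    Tendsto (fun x : ℝ => (exp x - 1 - x) / x ^ 2) (𝓝[≠] 0) (𝓝 (1 / 2)) := by
  rw [← tendsto_sub_nhds_zero_iff]
  have habs : Tendsto (fun x : ℝ => |x|) (𝓝[≠] 0) (𝓝 0) :=
    (continuous_abs.tendsto' 0 0 abs_zero).mono_left nhdsWithin_le_nhds
  refine squeeze_zero_norm' ?_ habs
  have hsmall : ∀ᶠ x : ℝ in 𝓝[≠] 0, |x| ≤ 1 :=
    habs.eventually (eventually_le_nhds one_pos)
  filter_upwards [hsmall, self_mem_nhdsWithin] with x hx hx0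
  exact abs_exp_sub_one_sub_div_sq_sub_half_le hx hx0

lemma tendsto_one_div_sub_one_div_exp_sub_one_nhdsNE :
    Tendsto (fun x : ℝ => 1 / x - 1 / (exp x - 1)) (𝓝[≠] 0) (𝓝 (1 / 2)) := by
  set g : ℝ → ℝ := fun x => (exp x - 1 - x) / x ^ 2 with hg_def
  have hg : Tendsto g (𝓝[≠] 0) (𝓝 (1 / 2)) := tendsto_exp_sub_one_sub_div_sq
  have hden : Tendsto (fun x => 1 + x * g x) (𝓝[≠] 0) (𝓝 1) := by
    simpa using ((tendsto_nhdsWithin_of_tendsto_nhds tendsto_id).mul hg).const_add 1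
  have hlim := hg.div hden one_ne_zero
  rw [div_one] at hlim
  refine hlim.congr' ?_
  filter_upwards [self_mem_nhdsWithin] with x (hx : x ≠ 0)
  have hfac : 1 + x * g x = (exp x - 1) / x := by
    simp only [hg_def]; field_simp; ring
  have := exp_sub_one_ne_zero hx
  rw [Pi.div_apply, hfac]
  simp only [hg_def]
  field_simp

lemma tendsto_one_div_sub_one_div_exp_sub_one_atTop :
    Tendsto (fun x : ℝ => 1 / x - 1 / (exp x - 1)) atTop (𝓝 0) := by
  have hexp : Tendsto (fun x : ℝ => exp x - 1) atTop atTop :=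
    tendsto_atTop_add_const_right _ (-1) tendsto_exp_atTop
  simpa [one_div] using tendsto_inv_atTop_zero.sub (tendsto_inv_atTop_zero.comp hexp)

lemma strictAntiOn_one_div_sub_one_div_exp_sub_one :
    StrictAntiOn (fun x : ℝ => 1 / x - 1 / (exp x - 1)) (Ioi 0) := by
  refine strictAntiOn_of_deriv_neg (convex_Ioi 0) (fun x hx =>
    (hasDerivAt_one_div_sub_one_div_exp_sub_one (ne_of_gt hx)).continuousAt.continuousWithinAt) ?_
  rw [interior_Ioi]
  intro x (hx : 0 < x)
  have hexp := exp_sub_one_ne_zero hx.ne'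
  rw [(hasDerivAt_one_div_sub_one_div_exp_sub_one hx.ne').deriv, sub_neg,
    div_lt_div_iff₀ (by positivity) (by positivity)]
  simpa [mul_comm] using sq_mul_exp_lt_sq_exp_sub_one hx.ne'

end Real

/-- The function `h(x) = 1/x − 1/(eˣ−1)` is strictly decreasing on `(0,∞)`,
tends to `1/2` at `0+` and to `0` at `∞`. -/
theorem one_div_sub_one_div_expm1_strictAnti :
    StrictAntiOn (fun x : ℝ => 1 / x - 1 / (Real.exp x - 1)) (Set.Ioi 0) ∧
    Tendsto (fun x : ℝ => 1 / x - 1 / (Real.exp x - 1))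
      (nhdsWithin 0 (Set.Ioi 0)) (nhds (1 / 2)) ∧
    Tendsto (fun x : ℝ => 1 / x - 1 / (Real.exp x - 1)) atTop (nhds 0) :=
  ⟨strictAntiOn_one_div_sub_one_div_exp_sub_one,
    tendsto_one_div_sub_one_div_exp_sub_one_nhdsNE.mono_left (nhdsGT_le_nhdsNE 0),
    tendsto_one_div_sub_one_div_exp_sub_one_atTop⟩
end

section
/- For every s > 0, one has s·log s = ∫₀^∞ (e^{−sx} − 1 + s·x·1_{[0,1]}(x))·x^{−2} dx − s·∫₀^∞ (e^{−x} − 1 + x·1_{[0,1]}(x))·x^{−2} dx, where both integrals converge absolutely. -/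
/-!
Substituting `x ↦ x / s` turns the first integrand into `s` times
`(e^{-x} - 1 + x 1_{[0,s]}(x)) / x²`, so everything reduces to moving the truncation point of this
kernel from `1` to `s`: that changes the integrand by `x⁻¹ 1_{(1,s]}(x)` and the integral by
`log s`. Both kernels are integrable because the numerator is `O(x²)` near `0` and bounded at
infinity.
-/

open MeasureTheory Set Real

noncomputable def compensatedKernel (t x : ℝ) : ℝ :=
  (exp (-x) - 1 + x * (Icc 0 t).indicator (fun _ => 1) x) / x ^ 2

lemma abs_exp_neg_sub_one_add_le_sq {y : ℝ} (hy : 0 ≤ y) : |exp (-y) - 1 + y| ≤ y ^ 2 := by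
  have hlow : 1 - y ≤ exp (-y) := by linarith [add_one_le_exp (-y)]
  have hpos : 0 < 1 + y := by linarith
  have hup : exp (-y) ≤ (1 + y)⁻¹ := by
    rw [exp_neg]; exact inv_anti₀ hpos (by linarith [add_one_le_exp y])
  have hinv : (1 + y) * (1 + y)⁻¹ = 1 := mul_inv_cancel₀ hpos.ne'
  rw [abs_le]
  constructor <;> nlinarith [inv_nonneg.2 hpos.le, pow_nonneg hy 3]

lemma abs_compensatedKernel_le_one {t x : ℝ} (hx : 0 < x) (hxt : x ≤ t) :
    |compensatedKernel t x| ≤ 1 := by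
  have hx2 : 0 < x ^ 2 := by positivity
  rw [compensatedKernel, indicator_of_mem (mem_Icc.2 ⟨hx.le, hxt⟩), mul_one, abs_div,
    abs_of_pos hx2, div_le_one hx2]
  exact abs_exp_neg_sub_one_add_le_sq hx.le

lemma abs_compensatedKernel_le_inv_sq {t x : ℝ} (hx : 0 < x) (htx : t < x) :
    |compensatedKernel t x| ≤ (x ^ 2)⁻¹ := by
  have hx2 : 0 < x ^ 2 := by positivity
  rw [compensatedKernel, indicator_of_notMem (fun h => htx.not_ge h.2), mul_zero, add_zero,
    abs_div, abs_of_pos hx2, div_eq_mul_inv]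
  refine mul_le_of_le_one_left (inv_nonneg.2 hx2.le) (abs_le.2 ⟨?_, ?_⟩)
  · linarith [exp_pos (-x)]
  · linarith [exp_le_one_iff.2 (neg_nonpos.2 hx.le)]

lemma measurable_compensatedKernel (t : ℝ) : Measurable (compensatedKernel t) := by
  unfold compensatedKernel
  fun_prop (disch := exact measurableSet_Icc)

lemma integrableOn_compensatedKernel {t : ℝ} (ht : 0 < t) :
    IntegrableOn (compensatedKernel t) (Ioi 0) := by
  rw [← Ioc_union_Ioi_eq_Ioi ht.le]
  refine IntegrableOn.union ?_ ?_
  · refine Integrable.mono' (integrableOn_const (C := (1 : ℝ)) measure_Ioc_lt_top.ne)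
      (measurable_compensatedKernel t).aestronglyMeasurable ?_
    filter_upwards [ae_restrict_mem measurableSet_Ioc] with x hx
    exact abs_compensatedKernel_le_one hx.1 hx.2
  · refine Integrable.mono' (integrableOn_Ioi_rpow_of_lt (by norm_num : (-2 : ℝ) < -1) ht)
      (measurable_compensatedKernel t).aestronglyMeasurable ?_
    filter_upwards [ae_restrict_mem measurableSet_Ioi] with x hx
    rw [norm_eq_abs, rpow_neg (ht.trans hx).le, rpow_ofNat]
    exact abs_compensatedKernel_le_inv_sq (ht.trans hx) hx

lemma compensatedKernel_sub_compensatedKernel {u t x : ℝ} (hut : u ≤ t) (hx : 0 < x) :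
    compensatedKernel t x - compensatedKernel u x = (Ioc u t).indicator (fun y => y⁻¹) x := by
  have hx0 : x ≠ 0 := hx.ne'
  unfold compensatedKernel
  simp only [indicator_apply, mem_Icc, mem_Ioc]
  split_ifs <;> first | (exfalso; grind) | (field_simp; ring)

lemma integral_compensatedKernel_sub_of_le {u t : ℝ} (hu : 0 < u) (hut : u ≤ t) :
    (∫ x in Ioi 0, compensatedKernel t x) - ∫ x in Ioi 0, compensatedKernel u x =
      log (t / u) := by
  rw [← integral_sub (integrableOn_compensatedKernel (hu.trans_le hut))
      (integrableOn_compensatedKernel hu),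
    setIntegral_congr_fun measurableSet_Ioi fun x hx =>
      compensatedKernel_sub_compensatedKernel hut hx,
    setIntegral_indicator measurableSet_Ioc,
    inter_eq_self_of_subset_right (Ioc_subset_Ioi_self.trans (Ioi_subset_Ioi hu.le)),
    ← intervalIntegral.integral_of_le hut, integral_inv_of_pos hu (hu.trans_le hut)]

lemma integral_compensatedKernel_sub {u t : ℝ} (hu : 0 < u) (ht : 0 < t) :
    (∫ x in Ioi 0, compensatedKernel t x) - ∫ x in Ioi 0, compensatedKernel u x =
      log t - log u := by
  rw [← log_div ht.ne' hu.ne']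
  rcases le_total u t with hut | htu
  · exact integral_compensatedKernel_sub_of_le hu hut
  · rw [← neg_sub, integral_compensatedKernel_sub_of_le ht htu, ← log_inv, inv_div]

lemma mul_sq_compensatedKernel_mul {s x : ℝ} (hs : 0 < s) (hx : 0 < x) :
    s ^ 2 * compensatedKernel s (s * x) =
      (exp (-s * x) - 1 + s * x * (Icc 0 1).indicator (fun _ => 1) x) / x ^ 2 := by
  have hind :
      (Icc 0 s).indicator (fun _ => (1 : ℝ)) (s * x) = (Icc 0 1).indicator (fun _ => 1) x := by
    simp only [indicator_apply, mem_Icc, mul_nonneg_iff_of_pos_left hs, mul_le_iff_le_one_right hs]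
  rw [compensatedKernel, hind, neg_mul]
  field_simp

lemma integrableOn_compensatedKernel_comp_mul {s t : ℝ} (hs : 0 < s) (ht : 0 < t) :
    IntegrableOn (fun x => compensatedKernel t (s * x)) (Ioi 0) := by
  rw [integrableOn_Ioi_comp_mul_left_iff _ _ hs, mul_zero]
  exact integrableOn_compensatedKernel ht

lemma integral_mul_sq_compensatedKernel_mul {s : ℝ} (hs : 0 < s) (t : ℝ) :
    ∫ x in Ioi 0, s ^ 2 * compensatedKernel t (s * x) =
      s * ∫ x in Ioi 0, compensatedKernel t x := by
  rw [integral_const_mul, integral_comp_mul_left_Ioi _ _ hs, mul_zero, smul_eq_mul, ← mul_assoc,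
    sq, mul_assoc s, mul_inv_cancel₀ hs.ne', mul_one]

/-- Frullani-type identity: for `s > 0`,
`s log s = ∫₀^∞ (e^{−sx} − 1 + sx·1_{[0,1]}(x)) x⁻² dx
          − s ∫₀^∞ (e^{−x} − 1 + x·1_{[0,1]}(x)) x⁻² dx`,
both integrals converging absolutely. -/
theorem s_log_s_integral (s : ℝ) (hs : 0 < s) :
    IntegrableOn
      (fun x : ℝ => (Real.exp (-s * x) - 1 +
        s * x * Set.indicator (Set.Icc (0:ℝ) 1) (fun _ => (1:ℝ)) x) / x ^ 2)
      (Set.Ioi 0) ∧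
    IntegrableOn
      (fun x : ℝ => (Real.exp (-x) - 1 +
        x * Set.indicator (Set.Icc (0:ℝ) 1) (fun _ => (1:ℝ)) x) / x ^ 2)
      (Set.Ioi 0) ∧
    s * Real.log s =
      (∫ x in Set.Ioi (0:ℝ), (Real.exp (-s * x) - 1 +
        s * x * Set.indicator (Set.Icc (0:ℝ) 1) (fun _ => (1:ℝ)) x) / x ^ 2)
      - s * ∫ x in Set.Ioi (0:ℝ), (Real.exp (-x) - 1 +
        x * Set.indicator (Set.Icc (0:ℝ) 1) (fun _ => (1:ℝ)) x) / x ^ 2 := by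
  have hscale : EqOn (fun x => s ^ 2 * compensatedKernel s (s * x))
      (fun x => (exp (-s * x) - 1 + s * x * (Icc 0 1).indicator (fun _ => 1) x) / x ^ 2) (Ioi 0) :=
    fun x hx => mul_sq_compensatedKernel_mul hs hx
  refine ⟨IntegrableOn.congr_fun ((integrableOn_compensatedKernel_comp_mul hs hs).const_mul _)
      hscale measurableSet_Ioi, integrableOn_compensatedKernel one_pos, ?_⟩
  rw [← setIntegral_congr_fun measurableSet_Ioi hscale, integral_mul_sq_compensatedKernel_mul hs]
  have hlog := integral_compensatedKernel_sub one_pos hs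
  rw [log_one, sub_zero] at hlog
  change _ = _ - s * ∫ x in Ioi 0, compensatedKernel 1 x
  rw [← hlog]
  ring
end

section
/- (Malmsten-type formula) For every s > 0, one has log Γ(1+s) = −γ·s + ∫₀^∞ (e^{−sx} − 1 + s·x)·(x·(eˣ − 1))^{−1} dx, where γ = −Γ′(1) is the Euler–Mascheroni constant. -/
open MeasureTheory Set Filter Real

/-!
Expanding `1 / (eˣ - 1) = ∑ₙ e^{-(n+1)x}`, the integrand becomes a series of nonnegative terms,
so integration and summation commute. By Frullani's integral the `n`-th term integrates to
`s / (n + 1) - log (1 + s / (n + 1))`. The partial sums of these are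
`s (H_N - log N) + log s + (Euler's approximation of log Γ(s))`, which tend to
`γ s + log (s Γ(s)) = γ s + log Γ(1 + s)`.
-/

lemma integrableOn_exp_neg_mul_sub_exp_neg_mul_div {a b : ℝ} (ha : 0 < a) (hb : 0 < b) :
    IntegrableOn (fun x => (exp (-b * x) - exp (-a * x)) / x) (Ioi 0) := by
  wlog hab : b ≤ a generalizing a b
  · simpa only [Pi.neg_def, ← neg_div, neg_sub] using (this hb ha (le_of_not_ge hab)).neg
  refine ((exp_neg_integrableOn_Ioi 0 hb).const_mul (a - b)).mono'
    (by fun_prop : Measurable _).aestronglyMeasurable ?_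
  refine (ae_restrict_iff' measurableSet_Ioi).2 (ae_of_all _ fun x (hx : 0 < x) => ?_)
  have hsplit : exp (-b * x) - exp (-a * x) = exp (-b * x) * (1 - exp (-((a - b) * x))) := by
    rw [mul_sub, mul_one, ← exp_add]; ring_nf
  have hlow : 0 ≤ 1 - exp (-((a - b) * x)) := by
    rw [sub_nonneg, exp_le_one_iff, neg_nonpos]; exact mul_nonneg (sub_nonneg.2 hab) hx.le
  have hup : 1 - exp (-((a - b) * x)) ≤ (a - b) * x := by
    linarith [add_one_le_exp (-((a - b) * x))]
  rw [Real.norm_eq_abs, hsplit, abs_of_nonneg (by positivity), div_le_iff₀ hx]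
  nlinarith [exp_pos (-b * x)]

lemma integral_exp_neg_mul_sub_exp_neg_mul_div {a b : ℝ} (ha : 0 < a) (hb : 0 < b) :
    ∫ x in Ioi 0, (exp (-b * x) - exp (-a * x)) / x = log (a / b) := by
  have hcont : Continuous fun y : ℝ => exp (-y) := by fun_prop
  have := Frullani.integral_Ioi_eq (L := 1) (R := 0)
    (hcont.locallyIntegrable.locallyIntegrableOn _) hb ha
    ((hcont.tendsto' 0 1 (by simp)).mono_left nhdsWithin_le_nhds)
    tendsto_exp_neg_atTop_nhds_zero
    (by simpa only [smul_eq_mul, inv_mul_eq_div, neg_mul]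
      using integrableOn_exp_neg_mul_sub_exp_neg_mul_div ha hb)
  simpa only [smul_eq_mul, inv_mul_eq_div, neg_mul, sub_zero, mul_one] using this

lemma exp_neg_mul_sub_one_add_mul_mul_exp_neg_mul_div (s b : ℝ) {x : ℝ} (hx : x ≠ 0) :
    (exp (-s * x) - 1 + s * x) * exp (-b * x) / x =
      s * exp (-b * x) - (exp (-b * x) - exp (-(b + s) * x)) / x := by
  have hexp : exp (-s * x) * exp (-b * x) = exp (-(b + s) * x) := by
    rw [← exp_add]; ring_nf
  rw [← hexp]
  field_simp
  ring

lemma integrableOn_exp_neg_mul_sub_one_add_mul_mul_exp_neg_mul_div {s b : ℝ} (hb : 0 < b)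
    (hbs : 0 < b + s) :
    IntegrableOn (fun x => (exp (-s * x) - 1 + s * x) * exp (-b * x) / x) (Ioi 0) :=
  IntegrableOn.congr_fun (((exp_neg_integrableOn_Ioi 0 hb).const_mul s).sub
    (integrableOn_exp_neg_mul_sub_exp_neg_mul_div hbs hb))
    (fun _ hx => (exp_neg_mul_sub_one_add_mul_mul_exp_neg_mul_div s b (ne_of_gt hx)).symm)
    measurableSet_Ioi

lemma integral_exp_neg_mul_sub_one_add_mul_mul_exp_neg_mul_div {s b : ℝ} (hb : 0 < b)
    (hbs : 0 < b + s) :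
    ∫ x in Ioi 0, (exp (-s * x) - 1 + s * x) * exp (-b * x) / x = s / b - log ((b + s) / b) := by
  rw [setIntegral_congr_fun measurableSet_Ioi
      fun x hx => exp_neg_mul_sub_one_add_mul_mul_exp_neg_mul_div s b (ne_of_gt hx),
    integral_sub ((exp_neg_integrableOn_Ioi 0 hb).const_mul s)
      (integrableOn_exp_neg_mul_sub_exp_neg_mul_div hbs hb),
    integral_const_mul, integral_exp_neg_mul_sub_exp_neg_mul_div hbs hb,
    integral_exp_mul_Ioi (neg_neg_of_pos hb)]
  simp [div_eq_mul_inv]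

lemma hasSum_exp_neg_mul_succ {x : ℝ} (hx : 0 < x) :
    HasSum (fun n : ℕ => exp (-(n + 1) * x)) (exp x - 1)⁻¹ := by
  have hq : exp (-x) < 1 := exp_lt_one_iff.2 (neg_lt_zero.2 hx)
  have hterm (n : ℕ) : exp (-x) * exp (-x) ^ n = exp (-(n + 1) * x) := by
    rw [← exp_nat_mul, ← exp_add]; ring_nf
  have hsum : exp (-x) * (1 - exp (-x))⁻¹ = (exp x - 1)⁻¹ := by
    have : exp x - 1 ≠ 0 := (sub_pos.2 (one_lt_exp_iff.2 hx)).ne'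
    rw [exp_neg]
    field_simp
  simpa only [hterm, hsum] using (hasSum_geometric_of_lt_one (exp_pos _).le hq).mul_left (exp (-x))

lemma sum_range_div_sub_log_div (s : ℝ) (hs : 0 < s) (N : ℕ) :
    ∑ n ∈ Finset.range N, (s / (n + 1) - log ((n + 1 + s) / (n + 1))) =
      s * (harmonic N - log N) + BohrMollerup.logGammaSeq s N + log s := by
  induction N with
  | zero => simp [BohrMollerup.logGammaSeq]
  | succ N ih =>
    have hN : (0 : ℝ) < N + 1 := by positivity
    simp only [BohrMollerup.logGammaSeq] at ih ⊢
    rw [Finset.sum_range_succ, ih, harmonic_succ, Nat.factorial_succ,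
      Finset.sum_range_succ _ (N + 1)]
    push_cast
    rw [log_mul hN.ne' (by positivity), log_div (by positivity) hN.ne', add_comm s]
    ring

lemma hasSum_div_sub_log_div {s : ℝ} (hs : 0 < s) :
    HasSum (fun n : ℕ => s / (n + 1) - log ((n + 1 + s) / (n + 1)))
      (log (Gamma (1 + s)) + eulerMascheroniConstant * s) := by
  have hnonneg (n : ℕ) : 0 ≤ s / (n + 1) - log ((n + 1 + s) / (n + 1)) := by
    have := log_le_sub_one_of_pos (x := (n + 1 + s) / (n + 1)) (by positivity)
    have hdiff : (n + 1 + s) / (n + 1) - 1 = s / (n + 1) := by field_simp; ring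
    linarith
  rw [hasSum_iff_tendsto_nat_of_nonneg hnonneg, funext (sum_range_div_sub_log_div s hs)]
  convert ((tendsto_harmonic_sub_log.const_mul s).add
    (BohrMollerup.tendsto_log_gamma hs)).add_const (log s) using 2
  rw [add_comm 1 s, Gamma_add_one hs.ne', log_mul hs.ne' (Gamma_pos_of_pos hs).ne']
  ring

/-- Malmsten-type formula: for every `s > 0`,
`log Γ(1+s) = −γ s + ∫₀^∞ (e^{−sx} − 1 + sx)/(x(eˣ−1)) dx`. -/
theorem log_Gamma_malmsten (s : ℝ) (hs : 0 < s) :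
    Real.log (Real.Gamma (1 + s)) =
      -Real.eulerMascheroniConstant * s +
        ∫ x in Set.Ioi (0:ℝ),
          (Real.exp (-s * x) - 1 + s * x) / (x * (Real.exp x - 1)) := by
  set F : ℕ → ℝ → ℝ := fun n x => (exp (-s * x) - 1 + s * x) * exp (-(n + 1) * x) / x
  have hF_int (n : ℕ) : IntegrableOn (F n) (Ioi 0) :=
    integrableOn_exp_neg_mul_sub_one_add_mul_mul_exp_neg_mul_div n.cast_add_one_pos
      (by positivity)
  have hF_integral (n : ℕ) :
      ∫ x in Ioi 0, F n x = s / (n + 1) - log ((n + 1 + s) / (n + 1)) :=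
    integral_exp_neg_mul_sub_one_add_mul_mul_exp_neg_mul_div n.cast_add_one_pos (by positivity)
  have hF_norm (n : ℕ) : ∫ x in Ioi 0, ‖F n x‖ = ∫ x in Ioi 0, F n x := by
    refine setIntegral_congr_fun measurableSet_Ioi fun x (hx : 0 < x) => norm_of_nonneg ?_
    have : 0 ≤ exp (-s * x) - 1 + s * x := by linarith [add_one_le_exp (-s * x)]
    positivity
  have hF_tsum (x : ℝ) (hx : 0 < x) :
      ∑' n, F n x = (exp (-s * x) - 1 + s * x) / (x * (exp x - 1)) := by
    rw [(((hasSum_exp_neg_mul_succ hx).mul_left _).div_const x).tsum_eq, mul_comm x, ← div_div,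
      ← div_eq_mul_inv]
  have hseries := hasSum_div_sub_log_div hs
  have hswap := hasSum_integral_of_summable_integral_norm hF_int
    (hseries.summable.congr fun n => by rw [hF_norm, hF_integral])
  rw [funext hF_integral, setIntegral_congr_fun measurableSet_Ioi hF_tsum] at hswap
  rw [hswap.unique hseries]
  ring
end

section
/- (Binet's formula for Euler's constant) γ = ∫₀^∞ ( e^{−x}/(1 − e^{−x}) − e^{−x}/x ) dx, where γ is the Euler–Mascheroni constant. -/
/-!
Since `Γ'(1) = -γ` and `Γ'(1) = ∫₀^∞ log t · e^{-t} dt`, it suffices to show that Binet's integrand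
`f t = e^{-t}/(1 - e^{-t}) - e^{-t}/t` and `t ↦ log t · e^{-t}` have opposite integrals. Their sum is
the derivative of `G t = log (1 - e^{-t}) - e^{-t} log t`, which tends to `0` at infinity and also
at `0⁺`, because there `G t = log ((1 - e^{-t})/t) + (1 - e^{-t})/t · t log t`. Both integrands are
integrable: `0 ≤ f t ≤ e^{-t}`, and `|log t| ≤ 2 (t^{1/2} + t^{-1/2})` reduces the other one to
Gamma integrals.
-/

open MeasureTheory Set Filter Real Topology

theorem integral_Ioi_of_hasDerivAt_of_tendsto_nhdsGT {E : Type*} [NormedAddCommGroup E]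
    [NormedSpace ℝ E] [CompleteSpace E] {f f' : ℝ → E} {a : ℝ} {l m : E}
    (hderiv : ∀ x ∈ Ioi a, HasDerivAt f (f' x) x) (hf' : IntegrableOn f' (Ioi a))
    (hl : Tendsto f (𝓝[>] a) (𝓝 l)) (hm : Tendsto f atTop (𝓝 m)) :
    ∫ x in Ioi a, f' x = m - l := by
  rw [← Ici_sdiff_left] at hl
  have h := integral_Ioi_of_hasDerivAt_of_tendsto (continuousWithinAt_update_same.mpr hl)
    (fun x (hx : a < x) ↦ (hderiv x hx).congr_of_eventuallyEq <|
      (eventually_ne_nhds hx.ne').mono fun y hy ↦ Function.update_of_ne hy l f)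
    hf' (hm.congr' <| (eventually_ne_atTop a).mono fun x hx ↦ (Function.update_of_ne hx l f).symm)
  rwa [Function.update_self] at h

theorem integral_log_mul_exp_neg :
    ∫ t in Ioi (0:ℝ), log t * exp (-t) = -eulerMascheroniConstant := by
  have hΓ : HasDerivAt Complex.Gamma (∫ t in Ioi (0:ℝ), ((log t * exp (-t) : ℝ) : ℂ)) 1 := by
    have h := Complex.hasDerivAt_GammaIntegral (s := 1) one_pos
    simp only [sub_self, Complex.cpow_zero, one_mul, ← Complex.ofReal_mul] at h
    refine h.congr_of_eventuallyEq ?_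
    filter_upwards [Complex.continuous_re.isOpen_preimage _ isOpen_Ioi |>.mem_nhds
      (by simp : (1:ℂ) ∈ Complex.re ⁻¹' Ioi 0)] with s hs
    exact Complex.Gamma_eq_integral hs
  have h := hΓ.unique Complex.hasDerivAt_Gamma_one
  rw [integral_complex_ofReal] at h
  exact_mod_cast h

theorem abs_log_le_rpow_add_rpow_neg {x ε : ℝ} (hx : 0 < x) (hε : 0 < ε) :
    |log x| ≤ (x ^ ε + x ^ (-ε)) / ε := by
  have hlog := log_le_rpow_div hx.le hε
  have hlog_inv := log_le_rpow_div (inv_pos.2 hx).le hε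
  rw [log_inv, inv_rpow hx.le, ← rpow_neg hx.le] at hlog_inv
  have h₁ := div_nonneg (rpow_pos_of_pos hx ε).le hε.le
  have h₂ := div_nonneg (rpow_pos_of_pos hx (-ε)).le hε.le
  rw [abs_le, add_div]
  constructor <;> linarith

theorem integrableOn_log_mul_exp_neg :
    IntegrableOn (fun t ↦ log t * exp (-t)) (Ioi 0) := by
  have hdom := ((GammaIntegral_convergent (s := 3 / 2) (by norm_num)).add
    (GammaIntegral_convergent (s := 1 / 2) (by norm_num))).const_mul 2
  refine hdom.mono' ?_ ?_
  · exact ((continuousOn_log.mono fun t ht ↦ ne_of_gt ht).mul (by fun_prop)).aestronglyMeasurable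
      measurableSet_Ioi
  · filter_upwards [ae_restrict_mem measurableSet_Ioi] with t ht
    have h := abs_log_le_rpow_add_rpow_neg ht (by norm_num : (0:ℝ) < 1 / 2)
    rw [norm_mul, norm_of_nonneg (exp_pos _).le, norm_eq_abs]
    norm_num at h ⊢
    nlinarith [exp_pos (-t)]

theorem one_sub_exp_neg_pos {t : ℝ} (ht : 0 < t) : 0 < 1 - exp (-t) :=
  sub_pos.2 <| exp_lt_one_iff.2 <| neg_lt_zero.2 ht

theorem exp_neg_div_one_sub_exp_neg_sub_mem_Icc {t : ℝ} (ht : 0 < t) :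
    exp (-t) / (1 - exp (-t)) - exp (-t) / t ∈ Icc 0 (exp (-t)) := by
  have hu : 0 < exp (-t) := exp_pos _
  have hlow : 1 - t ≤ exp (-t) := by linarith [add_one_le_exp (-t)]
  have hup : (t + 1) * exp (-t) ≤ 1 := by
    calc (t + 1) * exp (-t) ≤ exp t * exp (-t) := by gcongr; exact add_one_le_exp t
      _ = 1 := by rw [← exp_add, add_neg_cancel, exp_zero]
  have hden := mul_pos (one_sub_exp_neg_pos ht) ht
  rw [div_sub_div _ _ (one_sub_exp_neg_pos ht).ne' ht.ne', mem_Icc, div_le_iff₀ hden]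
  exact ⟨div_nonneg (by nlinarith) hden.le, by nlinarith⟩

theorem integrableOn_exp_neg_div_one_sub_exp_neg_sub :
    IntegrableOn (fun t ↦ exp (-t) / (1 - exp (-t)) - exp (-t) / t) (Ioi 0) := by
  have hcont : ContinuousOn (fun t ↦ exp (-t) / (1 - exp (-t)) - exp (-t) / t) (Ioi 0) :=
    .sub (.div (by fun_prop) (by fun_prop) fun t ht ↦ (one_sub_exp_neg_pos ht).ne')
      (.div (by fun_prop) (by fun_prop) fun t ht ↦ ne_of_gt ht)
  refine (exp_neg_integrableOn_Ioi 0 one_pos).mono'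
    (hcont.aestronglyMeasurable measurableSet_Ioi) ?_
  filter_upwards [ae_restrict_mem measurableSet_Ioi] with t ht
  obtain ⟨h₀, h₁⟩ := exp_neg_div_one_sub_exp_neg_sub_mem_Icc ht
  simpa [norm_of_nonneg h₀] using h₁

noncomputable def binetPrimitive (t : ℝ) : ℝ := log (1 - exp (-t)) - exp (-t) * log t

theorem hasDerivAt_binetPrimitive {t : ℝ} (ht : 0 < t) :
    HasDerivAt binetPrimitive
      (exp (-t) / (1 - exp (-t)) - exp (-t) / t + log t * exp (-t)) t := by
  have hexp : HasDerivAt (fun t ↦ exp (-t)) (-exp (-t)) t := by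
    simpa using (hasDerivAt_neg t).exp
  have h := ((hexp.const_sub 1).log (one_sub_exp_neg_pos ht).ne').sub
    (hexp.mul (hasDerivAt_log ht.ne'))
  exact h.congr_deriv (by ring)

theorem tendsto_binetPrimitive_atTop : Tendsto binetPrimitive atTop (𝓝 0) := by
  have hexp := tendsto_exp_neg_atTop_nhds_zero
  have hlog : Tendsto (fun t ↦ log (1 - exp (-t))) atTop (𝓝 0) := by
    simpa using (tendsto_const_nhds.sub hexp).log (by norm_num : (1:ℝ) - 0 ≠ 0)
  have hmul : Tendsto (fun t ↦ exp (-t) * log t) atTop (𝓝 0) := by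
    refine ((Asymptotics.isBigO_refl (fun t ↦ exp (-t)) atTop).mul_isLittleO
      isLittleO_log_id_atTop).trans_tendsto ?_
    simpa [mul_comm] using tendsto_pow_mul_exp_neg_atTop_nhds_zero 1
  rw [← sub_zero 0]
  exact hlog.sub hmul

theorem tendsto_one_sub_exp_neg_div_nhdsGT_zero :
    Tendsto (fun t ↦ (1 - exp (-t)) / t) (𝓝[>] 0) (𝓝 1) := by
  have h : HasDerivAt (fun t ↦ 1 - exp (-t)) 1 0 := by
    simpa using ((hasDerivAt_neg (0:ℝ)).exp).const_sub 1
  simpa [div_eq_inv_mul] using h.tendsto_slope_zero_right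

theorem tendsto_binetPrimitive_nhdsGT_zero : Tendsto binetPrimitive (𝓝[>] 0) (𝓝 0) := by
  have hq := tendsto_one_sub_exp_neg_div_nhdsGT_zero
  have h := (hq.log one_ne_zero).add (hq.mul (tendsto_log_mul_rpow_nhdsGT_zero zero_lt_one))
  rw [log_one, one_mul, add_zero] at h
  refine h.congr' ?_
  filter_upwards [self_mem_nhdsWithin] with t (ht : 0 < t)
  rw [binetPrimitive, log_div (one_sub_exp_neg_pos ht).ne' ht.ne', rpow_one]
  field_simp
  ring

/-- Binet's formula for Euler's constant:
`γ = ∫₀^∞ (e^{−x}/(1−e^{−x}) − e^{−x}/x) dx`. -/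
theorem binet_eulerMascheroni :
    Real.eulerMascheroniConstant =
      ∫ x in Set.Ioi (0:ℝ),
        (Real.exp (-x) / (1 - Real.exp (-x)) - Real.exp (-x) / x) := by
  have hf := integrableOn_exp_neg_div_one_sub_exp_neg_sub
  have hlog := integrableOn_log_mul_exp_neg
  have hsum := integral_Ioi_of_hasDerivAt_of_tendsto_nhdsGT
    (fun t ht ↦ hasDerivAt_binetPrimitive ht) (hf.add hlog)
    tendsto_binetPrimitive_nhdsGT_zero tendsto_binetPrimitive_atTop
  rw [integral_add hf hlog, integral_log_mul_exp_neg, sub_zero] at hsum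
  linarith
end

section
/- For every s with −3/2 < s < 1/2, one has ∫_{1/4}^∞ (x − 1/4)^s · √(4x − 1)/(2πx²) dx = (2^{1−2s}/π)·Γ(3/2 + s)·Γ(1/2 − s). In particular the function x ↦ √(4x−1)/(2πx²) on [1/4,∞) is a probability density (case s = 0). -/
/-!
The substitution `x = 1 / (4 (1 - y))` maps `(0, 1)` onto `(1/4, ∞)` and turns `x - 1/4` and
`4x - 1` into `y / (4 (1 - y))` and `y / (1 - y)`; together with the Jacobian `1 / (4 (1 - y)²)`
this makes the Mellin integrand `2^(1-2s)/π` times the Beta integrand `y^(s+1/2) (1-y)^(-s-1/2)`,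
whose integral is `Γ(s + 3/2) Γ(1/2 - s) / Γ(2)`. At `s = 0` the right side is
`(2/π) Γ(3/2) Γ(1/2) = 1`.
-/

open MeasureTheory Set Real

lemma image_div_one_sub_Ioo {c : ℝ} (hc : 0 < c) :
    (fun y : ℝ => c / (1 - y)) '' Ioo 0 1 = Ioi c := by
  ext x
  simp only [mem_image, mem_Ioo, mem_Ioi]
  constructor
  · rintro ⟨y, ⟨hy0, hy1⟩, rfl⟩
    rw [lt_div_iff₀ (by linarith)]
    nlinarith
  · intro hx
    have hx0 : 0 < x := hc.trans hx
    refine ⟨1 - c / x, ⟨?_, ?_⟩, ?_⟩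
    · rw [sub_pos, div_lt_one hx0]; exact hx
    · have : 0 < c / x := by positivity
      linarith
    · simp only [sub_sub_cancel]
      field_simp

lemma integral_Ioi_eq_integral_Ioo_div_one_sub {E : Type*} [NormedAddCommGroup E]
    [NormedSpace ℝ E] {c : ℝ} (hc : 0 < c) (g : ℝ → E) :
    ∫ x in Ioi c, g x = ∫ y in Ioo 0 1, (c / (1 - y) ^ 2) • g (c / (1 - y)) := by
  rw [← image_div_one_sub_Ioo hc, integral_image_eq_integral_abs_deriv_smul measurableSet_Ioo
    (f' := fun y => c / (1 - y) ^ 2)]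
  · refine setIntegral_congr_fun measurableSet_Ioo fun y ⟨_, hy1⟩ => ?_
    have : 0 < 1 - y := by linarith
    rw [abs_of_pos (by positivity)]
  · intro y ⟨_, hy1⟩
    have hy : 1 - y ≠ 0 := by linarith
    have h : HasDerivAt (fun z => c / (1 - z)) (c / (1 - y) ^ 2) y :=
      ((hasDerivAt_const y c).div ((hasDerivAt_id' y).const_sub 1) hy).congr_deriv (by ring)
    exact h.hasDerivWithinAt
  · intro y ⟨_, hy1⟩ z ⟨_, hz1⟩ h
    rw [div_eq_div_iff (by linarith) (by linarith), mul_right_inj' hc.ne'] at h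
    linarith

lemma integral_Ioo_rpow_mul_one_sub_rpow {a b : ℝ} (ha : 0 < a) (hb : 0 < b) :
    ∫ y in Ioo 0 1, y ^ (a - 1) * (1 - y) ^ (b - 1)
      = Gamma a * Gamma b / Gamma (a + b) := by
  apply Complex.ofReal_injective
  rw [Complex.ofReal_div, Complex.ofReal_mul, ← Complex.Gamma_ofReal, ← Complex.Gamma_ofReal,
    ← Complex.Gamma_ofReal, Complex.ofReal_add,
    ← Complex.betaIntegral_eq_Gamma_mul_div _ _ (by simpa) (by simpa), Complex.betaIntegral,
    intervalIntegral.integral_of_le zero_le_one, integral_Ioc_eq_integral_Ioo,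
    ← integral_complex_ofReal]
  refine setIntegral_congr_fun measurableSet_Ioo fun y ⟨hy0, hy1⟩ => ?_
  rw [Complex.ofReal_mul, Complex.ofReal_cpow hy0.le, Complex.ofReal_cpow (sub_pos.2 hy1).le]
  push_cast
  rfl

lemma two_rpow_one_sub_two_mul (s : ℝ) : (2 : ℝ) ^ (1 - 2 * s) = 2 / 4 ^ s := by
  rw [rpow_sub two_pos, rpow_one, rpow_mul two_pos.le]
  norm_num

lemma substituted_mellin_integrand_eq_beta_integrand (s : ℝ) {y : ℝ} (hy0 : 0 < y)
    (hy1 : y < 1) :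
    1 / 4 / (1 - y) ^ 2 * ((1 / 4 / (1 - y) - 1 / 4) ^ s *
        (√(4 * (1 / 4 / (1 - y)) - 1) / (2 * π * (1 / 4 / (1 - y)) ^ 2)))
      = 2 ^ (1 - 2 * s) / π * (y ^ (s + 3 / 2 - 1) * (1 - y) ^ (1 / 2 - s - 1)) := by
  have hy : 0 < 1 - y := by linarith
  have hx : 1 / 4 / (1 - y) - 1 / 4 = y / (4 * (1 - y)) := by field_simp; ring
  have h4x : 4 * (1 / 4 / (1 - y)) - 1 = y / (1 - y) := by field_simp; ring
  rw [hx, h4x, div_rpow hy0.le (by positivity), mul_rpow (by norm_num) hy.le,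
    sqrt_div hy0.le, two_rpow_one_sub_two_mul, show s + 3 / 2 - 1 = s + 1 / 2 by ring,
    show 1 / 2 - s - 1 = -(s + 1 / 2) by ring, rpow_neg hy.le, rpow_add hy0, rpow_add hy,
    ← sqrt_eq_rpow, ← sqrt_eq_rpow]
  have : 0 < √(1 - y) := sqrt_pos.2 hy
  field_simp
  norm_num

lemma Gamma_three_halves_mul_Gamma_one_half : Gamma (3 / 2) * Gamma (1 / 2) = π / 2 := by
  rw [show (3 / 2 : ℝ) = 1 / 2 + 1 by norm_num, Gamma_add_one (by norm_num), Gamma_one_half_eq,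
    mul_assoc, mul_self_sqrt pi_pos.le]
  ring

lemma integral_Ioi_rpow_sub_mul_free_half_stable_density {s : ℝ} (hs₁ : -(3 / 2) < s)
    (hs₂ : s < 1 / 2) :
    ∫ x in Ioi (1 / 4 : ℝ), (x - 1 / 4) ^ s * (√(4 * x - 1) / (2 * π * x ^ 2))
      = 2 ^ (1 - 2 * s) / π * Gamma (3 / 2 + s) * Gamma (1 / 2 - s) := by
  simp_rw [integral_Ioi_eq_integral_Ioo_div_one_sub (by norm_num : (0 : ℝ) < 1 / 4), smul_eq_mul]
  rw [setIntegral_congr_fun measurableSet_Ioo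
      fun y hy => substituted_mellin_integrand_eq_beta_integrand s hy.1 hy.2,
    integral_const_mul, integral_Ioo_rpow_mul_one_sub_rpow (by linarith) (by linarith),
    show s + 3 / 2 + (1 / 2 - s) = 2 by ring, Gamma_two, div_one, add_comm s, mul_assoc]

/-- Mellin transform of the shifted free positive `1/2`-stable law:
for `−3/2 < s < 1/2`,
`∫_{1/4}^∞ (x−1/4)^s √(4x−1)/(2πx²) dx = (2^{1−2s}/π) Γ(3/2+s) Γ(1/2−s)`;
in particular `x ↦ √(4x−1)/(2πx²)` is a probability density on `[1/4,∞)`. -/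
theorem free_half_stable_shifted_mellin :
    (∀ s : ℝ, -(3/2) < s → s < 1/2 →
      ∫ x in Set.Ioi (1/4 : ℝ),
          (x - 1/4) ^ s * (Real.sqrt (4 * x - 1) / (2 * π * x ^ 2))
        = (2:ℝ) ^ (1 - 2 * s) / π * Real.Gamma (3/2 + s) * Real.Gamma (1/2 - s)) ∧
    ∫ x in Set.Ioi (1/4 : ℝ), Real.sqrt (4 * x - 1) / (2 * π * x ^ 2) = 1 := by
  refine ⟨fun s hs₁ hs₂ => integral_Ioi_rpow_sub_mul_free_half_stable_density hs₁ hs₂, ?_⟩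
  have h := integral_Ioi_rpow_sub_mul_free_half_stable_density (s := 0) (by norm_num) (by norm_num)
  simp only [rpow_zero, one_mul, mul_zero, sub_zero, add_zero, rpow_one] at h
  rw [h, mul_assoc, Gamma_three_halves_mul_Gamma_one_half]
  field_simp
end

section
/- Let f be a whale-shaped density on [x₀, ∞) with unique mode M (the unique zero of f′). Then f is perfectly skew to the right: f(M + x) > f(M − x) for every x > 0. -/
open MeasureTheory Set Filter Real

/-- A function `f : ℝ → ℝ` is whale-shaped with support `[x₀, ∞)` (class
`WS₊`): it vanishes on `(-∞, x₀]`, is positive on `(x₀, ∞)`, smooth on the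
interior of its support, vanishes at both ends of its support, and every
derivative `f⁽ⁿ⁾` (`n ≥ 1`) vanishes exactly once on `(x₀, ∞)`. -/
def IsWhaleShaped (f : ℝ → ℝ) (x₀ : ℝ) : Prop :=
  (∀ x ≤ x₀, f x = 0) ∧ (∀ x ∈ Set.Ioi x₀, 0 < f x) ∧
  ContDiffOn ℝ (⊤ : ℕ∞) f (Set.Ioi x₀) ∧
  Filter.Tendsto f (nhdsWithin x₀ (Set.Ioi x₀)) (nhds 0) ∧
  Filter.Tendsto f Filter.atTop (nhds 0) ∧
  ∀ n : ℕ, 1 ≤ n → ∃! x, x ∈ Set.Ioi x₀ ∧ iteratedDerivWithin n f (Set.Ioi x₀) x = 0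

private lemma iteratedDerivWithin_isOpen_eq {f : ℝ → ℝ} {s : Set ℝ} (n : ℕ)
    (hs : IsOpen s) {x : ℝ} (hx : x ∈ s) :
    iteratedDerivWithin n f s x = iteratedDeriv n f x := by
  simp only [iteratedDerivWithin, iteratedDeriv,
    iteratedFDerivWithin_of_isOpen n hs hx]

private lemma mvt_aux {g g' : ℝ → ℝ} {s : Set ℝ}
    (hs : ∀ x ∈ s, HasDerivAt g (g' x) x) {a b : ℝ} (hab : a < b)
    (hsub : Set.Icc a b ⊆ s) :
    ∃ c ∈ Set.Ioo a b, g' c = (g b - g a) / (b - a) :=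
  exists_hasDerivAt_eq_slope g g' hab
    (fun x hx => (hs x (hsub hx)).continuousAt.continuousWithinAt)
    (fun x hx => hs x (hsub (Set.Ioo_subset_Icc_self hx)))

private lemma sign_aux {g : ℝ → ℝ} {t : Set ℝ} (hord : t.OrdConnected)
    (hg : ContinuousOn g t) (hne : ∀ x ∈ t, g x ≠ 0) {u v : ℝ}
    (hu : u ∈ t) (hv : v ∈ t) (hposu : 0 < g u) : 0 < g v := by
  rcases (hne v hv).lt_or_gt with h | h
  · exfalso
    have hsub : uIcc u v ⊆ t := hord.uIcc_subset hu hv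
    have h0 : (0:ℝ) ∈ uIcc (g u) (g v) := by
      rw [Set.mem_uIcc]; right; exact ⟨le_of_lt h, le_of_lt hposu⟩
    obtain ⟨c, hc, hc0⟩ := intermediate_value_uIcc (hg.mono hsub) h0
    exact hne c (hsub hc) hc0
  · exact h

set_option maxHeartbeats 2000000 in
/-- A whale-shaped density with mode `M` is perfectly skew to the right:
`f(M+x) > f(M-x)` for every `x > 0`. -/
theorem whaleShaped_perfectly_skew (f : ℝ → ℝ) (x₀ M : ℝ)
    (hf : IsWhaleShaped f x₀) (hdens : ∫ x, f x = 1)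
    (hM : M ∈ Set.Ioi x₀)
    (hM0 : iteratedDerivWithin 1 f (Set.Ioi x₀) M = 0) :
    ∀ x : ℝ, 0 < x → f (M - x) < f (M + x) := by
  obtain ⟨hzero, hpos, hsm, h0, hinf, huniq⟩ := hf
  have hso : IsOpen (Set.Ioi x₀) := isOpen_Ioi
  have hMx₀ : x₀ < M := hM
  -- smoothness chain
  have hC1 : ContDiffOn ℝ 2 (deriv f) (Set.Ioi x₀) := hsm.deriv_of_isOpen hso (by norm_cast)
  have hC2 : ContDiffOn ℝ 1 (deriv (deriv f)) (Set.Ioi x₀) :=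
    hC1.deriv_of_isOpen hso (by norm_num)
  have hC3 : ContDiffOn ℝ 0 (deriv (deriv (deriv f))) (Set.Ioi x₀) :=
    hC2.deriv_of_isOpen hso (by norm_num)
  have hD0 : ∀ x ∈ Set.Ioi x₀, HasDerivAt f (deriv f x) x := fun x hx =>
    (((hsm.contDiffAt (hso.mem_nhds hx)).differentiableAt (by simp))).hasDerivAt
  have hD1 : ∀ x ∈ Set.Ioi x₀, HasDerivAt (deriv f) (deriv (deriv f) x) x := fun x hx =>
    (((hC1.contDiffAt (hso.mem_nhds hx)).differentiableAt (by norm_num))).hasDerivAt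
  have hD2 : ∀ x ∈ Set.Ioi x₀, HasDerivAt (deriv (deriv f)) (deriv (deriv (deriv f)) x) x :=
    fun x hx =>
    (((hC2.contDiffAt (hso.mem_nhds hx)).differentiableAt (by norm_num))).hasDerivAt
  -- translation of iterated derivatives
  have hIter1 : ∀ x ∈ Set.Ioi x₀, iteratedDerivWithin 1 f (Set.Ioi x₀) x = deriv f x :=
    fun x hx => by rw [iteratedDerivWithin_isOpen_eq 1 hso hx, iteratedDeriv_one]
  have hIter2 : ∀ x ∈ Set.Ioi x₀,
      iteratedDerivWithin 2 f (Set.Ioi x₀) x = deriv (deriv f) x := fun x hx => by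
    rw [iteratedDerivWithin_isOpen_eq 2 hso hx,
      show (2:ℕ) = 1 + 1 from rfl, iteratedDeriv_succ, iteratedDeriv_one]
  have hIter3 : ∀ x ∈ Set.Ioi x₀,
      iteratedDerivWithin 3 f (Set.Ioi x₀) x = deriv (deriv (deriv f)) x := fun x hx => by
    rw [iteratedDerivWithin_isOpen_eq 3 hso hx,
      show (3:ℕ) = 1 + 1 + 1 from rfl, iteratedDeriv_succ, iteratedDeriv_succ,
      iteratedDeriv_one]
  have hM' : deriv f M = 0 := by rw [← hIter1 M hM]; exact hM0
  have u1 : ∀ x ∈ Set.Ioi x₀, deriv f x = 0 → x = M := by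
    obtain ⟨w, hw, hwu⟩ := huniq 1 le_rfl
    have hMw : M = w := hwu M ⟨hM, hM0⟩
    intro x hx hx0
    exact (hwu x ⟨hx, by rw [hIter1 x hx]; exact hx0⟩).trans hMw.symm
  obtain ⟨z₂, ⟨hz₂s, hz₂0'⟩, hz₂u⟩ := huniq 2 (by norm_num)
  have hz₂0 : deriv (deriv f) z₂ = 0 := by rw [← hIter2 z₂ hz₂s]; exact hz₂0'
  have u2 : ∀ x ∈ Set.Ioi x₀, deriv (deriv f) x = 0 → x = z₂ := fun x hx h =>
    hz₂u x ⟨hx, by rw [hIter2 x hx]; exact h⟩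
  obtain ⟨z₃, ⟨hz₃s, hz₃0'⟩, hz₃u⟩ := huniq 3 (by norm_num)
  have u3 : ∀ x ∈ Set.Ioi x₀, deriv (deriv (deriv f)) x = 0 → x = z₃ := fun x hx h =>
    hz₃u x ⟨hx, by rw [hIter3 x hx]; exact h⟩
  -- P1 / P2 : sign of deriv f
  have hfM : 0 < f M := hpos M hM
  have hIio : Set.Iio M ∈ nhdsWithin x₀ (Set.Ioi x₀) :=
    mem_nhdsWithin_of_mem_nhds (Iio_mem_nhds hMx₀)
  have hev : ∀ᶠ y in nhdsWithin x₀ (Set.Ioi x₀),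
      f y < f M ∧ y ∈ Set.Ioi x₀ ∧ y < M :=
    (h0.eventually_lt_const hfM).and
      ((eventually_mem_nhdsWithin).and (eventually_mem_set.2 hIio))
  obtain ⟨a, hafM, ha₀, haM⟩ := hev.exists
  have hsub1 : Set.Icc a M ⊆ Set.Ioi x₀ := fun y hy => lt_of_lt_of_le ha₀ hy.1
  obtain ⟨c₁, hc₁, hc₁'⟩ := mvt_aux (fun y hy => hD0 y (hsub1 hy)) haM subset_rfl
  have hc₁pos : 0 < deriv f c₁ := by
    rw [hc₁']; exact div_pos (by linarith) (by linarith)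
  have contd1 : ∀ t : Set ℝ, t ⊆ Set.Ioi x₀ → ContinuousOn (deriv f) t :=
    fun t ht y hy => ((hD1 y (ht hy)).continuousAt).continuousWithinAt
  have P1 : ∀ y, x₀ < y → y < M → 0 < deriv f y := by
    intro y hy1 hy2
    refine sign_aux Set.ordConnected_Ioo (contd1 _ Set.Ioo_subset_Ioi_self)
      (fun w hw => fun h => absurd (u1 w hw.1 h) (ne_of_lt hw.2)) ?_ ⟨hy1, hy2⟩ hc₁pos
    exact ⟨lt_trans ha₀ hc₁.1, hc₁.2⟩
  obtain ⟨b, hbfM, hbM⟩ := ((hinf.eventually_lt_const hfM).and (eventually_gt_atTop M)).exists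
  have hsub2 : Set.Icc M b ⊆ Set.Ioi x₀ := fun y hy => lt_of_lt_of_le hMx₀ hy.1
  obtain ⟨c₂, hc₂, hc₂'⟩ := mvt_aux (fun y hy => hD0 y (hsub2 hy)) hbM subset_rfl
  have hc₂neg : deriv f c₂ < 0 := by
    rw [hc₂']; exact div_neg_of_neg_of_pos (by linarith) (by linarith)
  have P2 : ∀ y, M < y → deriv f y < 0 := by
    intro y hy
    have hyx₀ : x₀ < y := lt_trans hMx₀ hy
    have hsub : Set.Ioi M ⊆ Set.Ioi x₀ := fun w hw => lt_trans hMx₀ hw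
    have := sign_aux Set.ordConnected_Ioi
      (ContinuousOn.neg (contd1 _ hsub))
      (fun w hw => fun h => absurd (u1 w (hsub hw) (by linarith [neg_eq_zero.mp h]))
        (ne_of_gt hw))
      hc₂.1 hy (by simpa using hc₂neg)
    simpa using this
  -- Q2 : second derivative positive beyond z₂
  have contd2 : ∀ t : Set ℝ, t ⊆ Set.Ioi x₀ → ContinuousOn (deriv (deriv f)) t :=
    fun t ht y hy => ((hD2 y (ht hy)).continuousAt).continuousWithinAt
  have hz₂x₀ : x₀ < z₂ := hz₂s
  have Q2 : ∀ t, z₂ < t → 0 < deriv (deriv f) t := by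
    by_contra hq
    push_neg at hq
    obtain ⟨u, huz, hu0⟩ := hq
    have hux₀ : x₀ < u := lt_trans hz₂x₀ huz
    have hune : deriv (deriv f) u ≠ 0 := fun h => absurd (u2 u hux₀ h) (ne_of_gt huz)
    have hsubz : Set.Ioi z₂ ⊆ Set.Ioi x₀ := fun w hw => lt_trans hz₂x₀ hw
    have allneg : ∀ t, z₂ < t → deriv (deriv f) t < 0 := by
      intro t ht
      have := sign_aux Set.ordConnected_Ioi
        (ContinuousOn.neg (contd2 _ hsubz))
        (fun w hw h => absurd (u2 w (hsubz hw) (by linarith [neg_eq_zero.mp h]))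
          (ne_of_gt hw))
        huz ht (by simpa using lt_of_le_of_ne hu0 hune)
      simpa using this
    set p := max M z₂ + 1 with hp
    have hpM : M < p := by simp [hp]; nlinarith [le_max_left M z₂]
    have hpz : z₂ < p := by simp [hp]; nlinarith [le_max_right M z₂]
    have hpx₀ : x₀ < p := lt_trans hMx₀ hpM
    have hd1p : deriv f p < 0 := P2 p hpM
    have hfp : 0 < f p := hpos p hpx₀
    have hstep : ∀ t, p < t → deriv f t < deriv f p := by
      intro t ht
      have hsub : Set.Icc p t ⊆ Set.Ioi x₀ := fun y hy => lt_of_lt_of_le hpx₀ hy.1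
      obtain ⟨c, hc, hc'⟩ := mvt_aux (fun y hy => hD1 y (hsub hy)) ht subset_rfl
      have hcneg : deriv (deriv f) c < 0 := allneg c (lt_trans hpz hc.1)
      have h1 : deriv f t - deriv f p = deriv (deriv f) c * (t - p) := by
        rw [hc', div_mul_cancel₀ _ (sub_ne_zero.2 (ne_of_gt ht))]
      nlinarith
    set T := p + f p / (-deriv f p) + 1 with hT
    have hTp : p < T := by
      have : 0 < f p / (-deriv f p) := div_pos hfp (by linarith)
      simp [hT]; linarith
    have hsub : Set.Icc p T ⊆ Set.Ioi x₀ := fun y hy => lt_of_lt_of_le hpx₀ hy.1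
    obtain ⟨c, hc, hc'⟩ := mvt_aux (fun y hy => hD0 y (hsub hy)) hTp subset_rfl
    have h1 : f T - f p = deriv f c * (T - p) := by
      rw [hc', div_mul_cancel₀ _ (sub_ne_zero.2 (ne_of_gt hTp))]
    have h2 : deriv f c < deriv f p := hstep c hc.1
    have hne : deriv f p ≠ 0 := ne_of_lt hd1p
    have h3 : deriv f p * (f p / (-deriv f p)) = - f p := by
      have hq : f p / (-deriv f p) * (-deriv f p) = f p :=
        div_mul_cancel₀ _ (neg_ne_zero.2 hne)
      linear_combination -hq
    have h4 : f T < f p + deriv f p * (T - p) := by nlinarith [sub_pos.2 hTp]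
    have h6 : T - p = f p / (-deriv f p) + 1 := by rw [hT]; ring
    have h5 : f p + deriv f p * (T - p) = deriv f p := by
      rw [h6, mul_add, h3]; ring
    have := hpos T (lt_trans hpx₀ hTp)
    linarith
  -- M < z₂
  have hMz₂ : M < z₂ := by
    by_contra h
    push_neg at h
    have hsub : Set.Icc M (M+1) ⊆ Set.Ioi x₀ := fun y hy => lt_of_lt_of_le hMx₀ hy.1
    obtain ⟨c, hc, hc'⟩ := mvt_aux (fun y hy => hD1 y (hsub hy)) (by linarith : M < M + 1)
      subset_rfl
    have h1 : deriv f (M+1) < 0 := P2 (M+1) (by linarith)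
    have h2 : 0 < deriv (deriv f) c := Q2 c (lt_of_le_of_lt h hc.1)
    rw [hc', hM'] at h2
    have he : (deriv f (M + 1) - 0) / (M + 1 - M) = deriv f (M + 1) := by
      rw [sub_zero, show M + 1 - M = (1:ℝ) by ring, div_one]
    rw [he] at h2
    linarith
  -- Q1 : second derivative negative on (x₀, z₂)
  have Q1 : ∀ y, x₀ < y → y < z₂ → deriv (deriv f) y < 0 := by
    set t₀ := (M + z₂)/2 with ht₀
    have hMt₀ : M < t₀ := by rw [ht₀]; linarith
    have ht₀z : t₀ < z₂ := by rw [ht₀]; linarith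
    have hsub : Set.Icc M t₀ ⊆ Set.Ioi x₀ := fun y hy => lt_of_lt_of_le hMx₀ hy.1
    obtain ⟨c, hc, hc'⟩ := mvt_aux (fun y hy => hD1 y (hsub hy)) hMt₀ subset_rfl
    have hcneg : deriv (deriv f) c < 0 := by
      rw [hc', hM']
      exact div_neg_of_neg_of_pos (by linarith [P2 t₀ hMt₀]) (by linarith)
    intro y hy1 hy2
    have := sign_aux Set.ordConnected_Ioo
      (ContinuousOn.neg (contd2 _ Set.Ioo_subset_Ioi_self))
      (fun w hw h => absurd (u2 w hw.1 (by linarith [neg_eq_zero.mp h])) (ne_of_lt hw.2))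
      (⟨lt_trans hMx₀ hc.1, lt_trans hc.2 ht₀z⟩ : c ∈ Set.Ioo x₀ z₂)
      (⟨hy1, hy2⟩ : y ∈ Set.Ioo x₀ z₂) (by simpa using hcneg)
    simpa using this
  -- third derivative facts
  have hz₃x₀ : x₀ < z₃ := hz₃s
  have d2M : deriv (deriv f) M < 0 := Q1 M hMx₀ hMz₂
  have hsubMz : Set.Icc M z₂ ⊆ Set.Ioi x₀ := fun y hy => lt_of_lt_of_le hMx₀ hy.1
  obtain ⟨c₃, hc₃, hc₃'⟩ := mvt_aux (fun y hy => hD2 y (hsubMz hy)) hMz₂ subset_rfl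
  have hc₃pos : 0 < deriv (deriv (deriv f)) c₃ := by
    rw [hc₃', hz₂0]
    exact div_pos (by linarith) (by linarith)
  have contd3 : ∀ t : Set ℝ, t ⊆ Set.Ioi x₀ → ContinuousOn (deriv (deriv (deriv f))) t :=
    fun t ht => hC3.continuousOn.mono ht
  have Rtail : ∀ t, z₃ < t → deriv (deriv (deriv f)) t < 0 := by
    by_contra hq
    push_neg at hq
    obtain ⟨u, huz, hu0⟩ := hq
    have hux₀ : x₀ < u := lt_trans hz₃x₀ huz
    have hune : deriv (deriv (deriv f)) u ≠ 0 := fun h =>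
      absurd (u3 u hux₀ h) (ne_of_gt huz)
    have hsubz : Set.Ioi z₃ ⊆ Set.Ioi x₀ := fun w hw => lt_trans hz₃x₀ hw
    have allpos : ∀ t, z₃ < t → 0 < deriv (deriv (deriv f)) t := fun t ht =>
      sign_aux Set.ordConnected_Ioi (contd3 _ hsubz)
        (fun w hw h => absurd (u3 w (hsubz hw) h) (ne_of_gt hw))
        huz ht (lt_of_le_of_ne hu0 (Ne.symm hune))
    set p := max (max M z₂) z₃ + 1 with hp
    have hpM : M < p := by
      have := le_max_left (max M z₂) z₃
      have := le_max_left M z₂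
      simp only [hp]; linarith
    have hpz₂ : z₂ < p := by
      have := le_max_left (max M z₂) z₃
      have := le_max_right M z₂
      simp only [hp]; linarith
    have hpz₃ : z₃ < p := by
      have := le_max_right (max M z₂) z₃
      simp only [hp]; linarith
    have hpx₀ : x₀ < p := lt_trans hMx₀ hpM
    have hd1p : deriv f p < 0 := P2 p hpM
    have hd2p : 0 < deriv (deriv f) p := Q2 p hpz₂
    have hne2 : deriv (deriv f) p ≠ 0 := ne_of_gt hd2p
    have hstep : ∀ t, p < t → deriv (deriv f) p < deriv (deriv f) t := by
      intro t ht
      have hsub : Set.Icc p t ⊆ Set.Ioi x₀ := fun y hy => lt_of_lt_of_le hpx₀ hy.1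
      obtain ⟨c, hc, hc'⟩ := mvt_aux (fun y hy => hD2 y (hsub hy)) ht subset_rfl
      have hcpos : 0 < deriv (deriv (deriv f)) c := allpos c (lt_trans hpz₃ hc.1)
      have h1 : deriv (deriv f) t - deriv (deriv f) p
          = deriv (deriv (deriv f)) c * (t - p) := by
        rw [hc', div_mul_cancel₀ _ (sub_ne_zero.2 (ne_of_gt ht))]
      nlinarith
    set T := p + (-deriv f p) / deriv (deriv f) p + 1 with hT
    have hTp : p < T := by
      have : 0 < (-deriv f p) / deriv (deriv f) p := div_pos (by linarith) hd2p
      simp only [hT]; linarith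
    have hsub : Set.Icc p T ⊆ Set.Ioi x₀ := fun y hy => lt_of_lt_of_le hpx₀ hy.1
    obtain ⟨c, hc, hc'⟩ := mvt_aux (fun y hy => hD1 y (hsub hy)) hTp subset_rfl
    have h1 : deriv f T - deriv f p = deriv (deriv f) c * (T - p) := by
      rw [hc', div_mul_cancel₀ _ (sub_ne_zero.2 (ne_of_gt hTp))]
    have h2 : deriv (deriv f) p < deriv (deriv f) c := hstep c hc.1
    have h3 : deriv (deriv f) p * ((-deriv f p) / deriv (deriv f) p) = -deriv f p := by
      have hq : (-deriv f p) / deriv (deriv f) p * deriv (deriv f) p = -deriv f p :=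
        div_mul_cancel₀ _ hne2
      linear_combination hq
    have h6 : T - p = (-deriv f p) / deriv (deriv f) p + 1 := by rw [hT]; ring
    have h4 : deriv f p + deriv (deriv f) p * (T - p) < deriv f T := by
      nlinarith [sub_pos.2 hTp]
    have h5 : deriv f p + deriv (deriv f) p * (T - p) = deriv (deriv f) p := by
      rw [h6, mul_add, h3]; ring
    have := P2 T (lt_trans hpM hTp)
    linarith
  -- z₂ ≤ z₃
  have hz₂z₃ : z₂ ≤ z₃ := by
    by_contra h
    push_neg at h
    have hsub : Set.Icc z₂ (z₂+1) ⊆ Set.Ioi x₀ := fun y hy => lt_of_lt_of_le hz₂x₀ hy.1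
    obtain ⟨c, hc, hc'⟩ := mvt_aux (fun y hy => hD2 y (hsub hy))
      (by linarith : z₂ < z₂ + 1) subset_rfl
    have h2 : 0 < deriv (deriv f) (z₂ + 1) := Q2 (z₂+1) (by linarith)
    have he : (deriv (deriv f) (z₂ + 1) - deriv (deriv f) z₂) / (z₂ + 1 - z₂)
        = deriv (deriv f) (z₂ + 1) := by
      rw [hz₂0, sub_zero, show z₂ + 1 - z₂ = (1:ℝ) by ring, div_one]
    rw [he] at hc'
    have := Rtail c (lt_trans h hc.1)
    linarith
  -- R1 : third derivative positive on (x₀, z₂)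
  have R1 : ∀ y, x₀ < y → y < z₂ → 0 < deriv (deriv (deriv f)) y := by
    intro y hy1 hy2
    exact sign_aux Set.ordConnected_Ioo (contd3 _ Set.Ioo_subset_Ioi_self)
      (fun w hw h => absurd (u3 w hw.1 h) (ne_of_lt (lt_of_lt_of_le hw.2 hz₂z₃)))
      (show c₃ ∈ Set.Ioo x₀ z₂ from ⟨lt_trans hMx₀ hc₃.1, hc₃.2⟩)
      (⟨hy1, hy2⟩ : y ∈ Set.Ioo x₀ z₂) hc₃pos
  -- monotonicity of the second derivative on (x₀, z₂)
  have hmono : ∀ u v, x₀ < u → u < v → v < z₂ →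
      deriv (deriv f) u < deriv (deriv f) v := by
    intro u v hu huv hv
    have hsub : Set.Icc u v ⊆ Set.Ioi x₀ := fun y hy => lt_of_lt_of_le hu hy.1
    obtain ⟨c, hc, hc'⟩ := mvt_aux (fun y hy => hD2 y (hsub hy)) huv subset_rfl
    have hcpos : 0 < deriv (deriv (deriv f)) c :=
      R1 c (lt_trans hu hc.1) (lt_trans hc.2 hv)
    have h1 : deriv (deriv f) v - deriv (deriv f) u
        = deriv (deriv (deriv f)) c * (v - u) := by
      rw [hc', div_mul_cancel₀ _ (sub_ne_zero.2 (ne_of_gt huv))]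
    nlinarith
  intro x hx
  by_cases hcase : M - x₀ ≤ x
  · have h1 : f (M - x) = 0 := hzero _ (by linarith)
    have h2 : 0 < f (M + x) := hpos _ (by simp only [Set.mem_Ioi]; linarith)
    linarith
  · push_neg at hcase
    have hx₀Mx : x₀ < M - x := by linarith
    have memp : ∀ y ∈ Set.Icc 0 x, M + y ∈ Set.Ioi x₀ := fun y hy => by
      simp only [Set.mem_Ioi]; linarith [hy.1]
    have memm : ∀ y ∈ Set.Icc 0 x, M - y ∈ Set.Ioi x₀ := fun y hy => by
      simp only [Set.mem_Ioi]; linarith [hy.2]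
    have hg1D : ∀ y ∈ Set.Icc 0 x,
        HasDerivAt (fun y => deriv f (M + y) + deriv f (M - y))
          (deriv (deriv f) (M + y) - deriv (deriv f) (M - y)) y := by
      intro y hy
      have hdp : HasDerivAt (fun y => deriv f (M + y)) (deriv (deriv f) (M + y) * 1) y :=
        (hD1 _ (memp y hy)).comp y ((hasDerivAt_id y).const_add M)
      have hdm : HasDerivAt (fun y => deriv f (M - y)) (deriv (deriv f) (M - y) * (-1)) y :=
        (hD1 _ (memm y hy)).comp y ((hasDerivAt_id y).const_sub M)
      have h := hdp.add hdm
      exact h.congr_deriv (by ring)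
    have hgD : ∀ y ∈ Set.Icc 0 x,
        HasDerivAt (fun y => f (M + y) - f (M - y))
          (deriv f (M + y) + deriv f (M - y)) y := by
      intro y hy
      have hdp : HasDerivAt (fun y => f (M + y)) (deriv f (M + y) * 1) y :=
        (hD0 _ (memp y hy)).comp y ((hasDerivAt_id y).const_add M)
      have hdm : HasDerivAt (fun y => f (M - y)) (deriv f (M - y) * (-1)) y :=
        (hD0 _ (memm y hy)).comp y ((hasDerivAt_id y).const_sub M)
      have h := hdp.sub hdm
      exact h.congr_deriv (by ring)
    have hg1pos : ∀ y, 0 < y → y ≤ x → 0 < deriv f (M + y) + deriv f (M - y) := by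
      intro y hy0 hyx
      have hsub : Set.Icc 0 y ⊆ Set.Icc 0 x := Set.Icc_subset_Icc le_rfl hyx
      obtain ⟨c, hc, hc'⟩ := mvt_aux (fun w hw => hg1D w (hsub hw)) hy0 subset_rfl
      have hdiff : 0 < deriv (deriv f) (M + c) - deriv (deriv f) (M - c) := by
        have hMc₁ : x₀ < M - c := by linarith [hc.2]
        have hMc₂ : M - c < z₂ := by linarith [hc.1, hMz₂]
        rcases lt_trichotomy (M + c) z₂ with h | h | h
        · have := hmono (M - c) (M + c) hMc₁ (by linarith [hc.1]) h
          linarith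
        · have h2 : deriv (deriv f) (M + c) = 0 := by rw [h]; exact hz₂0
          have := Q1 (M - c) hMc₁ hMc₂
          linarith
        · have h2 := Q2 (M + c) h
          have h3 := Q1 (M - c) hMc₁ hMc₂
          linarith
      rw [hc'] at hdiff
      simp only [add_zero, sub_zero, hM'] at hdiff
      rcases div_pos_iff.mp hdiff with ⟨h1, _⟩ | ⟨_, h2⟩
      · linarith
      · linarith
    obtain ⟨c, hc, hc'⟩ := mvt_aux hgD hx subset_rfl
    have hg1c : 0 < deriv f (M + c) + deriv f (M - c) := hg1pos c hc.1 (le_of_lt hc.2)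
    rw [hc'] at hg1c
    simp only [add_zero, sub_zero, sub_self] at hg1c
    rcases div_pos_iff.mp hg1c with ⟨h1, _⟩ | ⟨_, h2⟩
    · linarith
    · linarith
end

section
/- If f is a whale-shaped function with support [x₀, ∞), then the tilted function x ↦ e^{−x} f(x) is also whale-shaped with support [x₀, ∞). -/
open MeasureTheory Set Filter Real

namespace WhaleAux

/-- Sign pattern: `σ*u` is negative on `(x₀, b)`, zero at `b`, positive after `b`. -/
def Pat (x₀ σ : ℝ) (u : ℝ → ℝ) (b : ℝ) : Prop :=
  x₀ < b ∧ (∀ x, x₀ < x → x < b → σ * u x < 0) ∧ u b = 0 ∧ ∀ x, b < x → 0 < σ * u x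

lemma Pat.zero_iff {x₀ σ : ℝ} {u : ℝ → ℝ} {b : ℝ} (h : Pat x₀ σ u b) :
    ∀ x, x₀ < x → u x = 0 → x = b := by
  intro x hx hux
  rcases lt_trichotomy x b with h1 | h1 | h1
  · have := h.2.1 x hx h1; rw [hux] at this; simp at this
  · exact h1
  · have := h.2.2.2 x h1; rw [hux] at this; simp at this

lemma Pat.congr {x₀ σ : ℝ} {u v : ℝ → ℝ} {b : ℝ} (h : Pat x₀ σ u b)
    (huv : EqOn u v (Ioi x₀)) : Pat x₀ σ v b := by
  obtain ⟨h1, h2, h3, h4⟩ := h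
  refine ⟨h1, fun x hx hxb => ?_, ?_, fun x hx => ?_⟩
  · rw [← huv hx]; exact h2 x hx hxb
  · rw [← huv h1]; exact h3
  · rw [← huv (h1.trans hx)]; exact h4 x hx

/-- strict increase of `σ*u` from positive derivative. -/
lemma mono_aux {σ : ℝ} {u : ℝ → ℝ} {a b : ℝ} (hab : a < b)
    (hcont : ContinuousOn u (Icc a b))
    (hder : ∀ x ∈ Ioo a b, 0 < σ * deriv u x) :
    σ * u a < σ * u b := by
  have h : StrictMonoOn (fun x => σ * u x) (Icc a b) := by
    apply strictMonoOn_of_deriv_pos (convex_Icc a b)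
      (continuousOn_const.mul hcont)
    intro x hx
    rw [interior_Icc] at hx
    show 0 < deriv (fun y => σ * u y) x
    rw [deriv_const_mul_field]
    exact hder x hx
  exact h (left_mem_Icc.2 hab.le) (right_mem_Icc.2 hab.le) hab

/-- MVT giving a point with positive derivative between points with increasing values. -/
lemma mvt_pos {u : ℝ → ℝ} {a b : ℝ} (hab : a < b)
    (hcont : ContinuousOn u (Icc a b))
    (hdiff : ∀ x ∈ Ioo a b, DifferentiableAt ℝ u x)
    (hlt : u a < u b) : ∃ ξ ∈ Ioo a b, 0 < deriv u ξ := by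
  obtain ⟨c, hc, hc'⟩ := exists_deriv_eq_slope u hab hcont
    (fun x hx => (hdiff x hx).differentiableWithinAt)
  exact ⟨c, hc, hc' ▸ div_pos (by linarith) (by linarith)⟩

lemma mvt_neg {u : ℝ → ℝ} {a b : ℝ} (hab : a < b)
    (hcont : ContinuousOn u (Icc a b))
    (hdiff : ∀ x ∈ Ioo a b, DifferentiableAt ℝ u x)
    (hlt : u b < u a) : ∃ ξ ∈ Ioo a b, deriv u ξ < 0 := by
  obtain ⟨c, hc, hc'⟩ := exists_deriv_eq_slope u hab hcont
    (fun x hx => (hdiff x hx).differentiableWithinAt)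
  exact ⟨c, hc, hc' ▸ div_neg_of_neg_of_pos (by linarith) (by linarith)⟩

/-- If `σ*u > 0` on `(A,∞)` and `u → 0` at `∞`, then `σ * deriv u` takes negative
values at arbitrarily large points. -/
lemma tail_sign {σ : ℝ} {u : ℝ → ℝ} {A : ℝ}
    (hdiff : ∀ x ∈ Ioi A, DifferentiableAt ℝ u x)
    (hpos : ∀ x ∈ Ioi A, 0 < σ * u x)
    (hlim : Tendsto u atTop (nhds 0)) :
    ∀ X, ∃ ξ, X < ξ ∧ A < ξ ∧ σ * deriv u ξ < 0 := by
  intro X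
  set c := max A X + 1 with hc
  have hcA : A < c := lt_of_le_of_lt (le_max_left A X) (by simp [hc])
  have hcX : X < c := lt_of_le_of_lt (le_max_right A X) (by simp [hc])
  have hcpos : 0 < σ * u c := hpos c hcA
  have hev : ∀ᶠ y in atTop, σ * u y < σ * u c := by
    have h2 : Tendsto (fun y => σ * u y) atTop (nhds (σ * 0)) := hlim.const_mul σ
    rw [mul_zero] at h2
    exact h2.eventually_lt_const hcpos
  obtain ⟨y, hy1, hy2⟩ := (hev.and (eventually_gt_atTop c)).exists
  have hder : ∀ x ∈ Ioo c y, DifferentiableAt ℝ (fun t => σ * u t) x := fun x hx =>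
    (hdiff x (hcA.trans hx.1)).const_mul σ
  have hconts : ContinuousOn (fun t => σ * u t) (Icc c y) := by
    intro x hx
    exact ((hdiff x (lt_of_lt_of_le hcA hx.1)).const_mul σ).continuousAt.continuousWithinAt
  obtain ⟨ξ, hξ, hξ'⟩ := mvt_neg hy2 hconts hder hy1
  refine ⟨ξ, hcX.trans hξ.1, hcA.trans hξ.1, ?_⟩
  rw [deriv_const_mul_field] at hξ'
  exact hξ'

/-- If `σ*u < 0` on `(x₀,b)` and `u b = 0`, then `σ * deriv u` is positive somewhere
in `(x₀, b)`. -/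
lemma cross_sign {σ x₀ : ℝ} {u : ℝ → ℝ} {b : ℝ} (hb : x₀ < b)
    (hdiff : ∀ x ∈ Ioi x₀, DifferentiableAt ℝ u x)
    (hneg : ∀ x, x₀ < x → x < b → σ * u x < 0) (hub : u b = 0) :
    ∃ ξ, x₀ < ξ ∧ ξ < b ∧ 0 < σ * deriv u ξ := by
  set a := (x₀ + b) / 2 with ha
  have ha1 : x₀ < a := by simp [ha]; linarith
  have ha2 : a < b := by simp [ha]; linarith
  have hder : ∀ x ∈ Ioo a b, DifferentiableAt ℝ (fun t => σ * u t) x := fun x hx =>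
    (hdiff x (ha1.trans hx.1)).const_mul σ
  have hconts : ContinuousOn (fun t => σ * u t) (Icc a b) := fun x hx =>
    ((hdiff x (lt_of_lt_of_le ha1 hx.1)).const_mul σ).continuousAt.continuousWithinAt
  have hlt : σ * u a < σ * u b := by
    rw [hub, mul_zero]; exact hneg a ha1 ha2
  obtain ⟨ξ, hξ, hξ'⟩ := mvt_pos ha2 hconts hder hlt
  refine ⟨ξ, ha1.trans hξ.1, hξ.2, ?_⟩
  rw [deriv_const_mul_field] at hξ'
  exact hξ'

/-- From a unique zero, a negative point, and positive tail points, get the pattern. -/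
lemma pat_of {σ x₀ : ℝ} {u : ℝ → ℝ} {b : ℝ} (hb : x₀ < b) (hub : u b = 0)
    (huniq : ∀ x, x₀ < x → u x = 0 → x = b)
    (hcont : ContinuousOn u (Ioi x₀))
    (hneg : ∃ p, x₀ < p ∧ σ * u p < 0)
    (hpos : ∀ X, ∃ q, X < q ∧ 0 < σ * u q) :
    Pat x₀ σ u b := by
  obtain ⟨p, hp1, hp2⟩ := hneg
  have hIcc : ∀ ⦃s t : ℝ⦄, x₀ < s → Icc s t ⊆ Ioi x₀ := fun s t hs x hx =>
    lt_of_lt_of_le hs hx.1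
  have hnz : ∀ x, x₀ < x → x ≠ b → σ * u x ≠ 0 := by
    intro x hx hxb h
    rcases mul_eq_zero.1 h with h | h
    · rw [h, zero_mul] at hp2; exact absurd hp2 (lt_irrefl 0)
    · exact hxb (huniq x hx h)
  have hafter : ∀ x, b < x → 0 < σ * u x := by
    intro x hx
    rcases lt_or_ge 0 (σ * u x) with h | h
    · exact h
    have hxne : σ * u x ≠ 0 := hnz x (hb.trans hx) (ne_of_gt hx)
    have hxneg : σ * u x < 0 := lt_of_le_of_ne h hxne
    obtain ⟨q, hq1, hq2⟩ := hpos x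
    have hc : ContinuousOn (fun t => σ * u t) (Icc x q) :=
      continuousOn_const.mul (hcont.mono (hIcc (hb.trans hx)))
    obtain ⟨z, hz, hz'⟩ := intermediate_value_Icc hq1.le hc
      (⟨hxneg.le, hq2.le⟩ : (0:ℝ) ∈ Icc (σ * u x) (σ * u q))
    have hz0 : σ * u z = 0 := hz'
    have hzb : z = b := by
      rcases mul_eq_zero.1 hz0 with h | h
      · rw [h, zero_mul] at hp2; exact absurd hp2 (lt_irrefl 0)
      · exact huniq z (hb.trans (hx.trans_le hz.1)) h
    have hfin : b < z := hx.trans_le hz.1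
    rw [hzb] at hfin; exact absurd hfin (lt_irrefl b)
  have hpb : p < b := by
    rcases lt_trichotomy p b with h | h | h
    · exact h
    · exfalso; rw [h, hub, mul_zero] at hp2; exact absurd hp2 (lt_irrefl 0)
    · exfalso; have := hafter p h; linarith
  refine ⟨hb, fun x hx hxb => ?_, hub, hafter⟩
  rcases lt_or_ge (σ * u x) 0 with h | h
  · exact h
  have hxne : σ * u x ≠ 0 := hnz x hx (ne_of_lt hxb)
  have hxpos : 0 < σ * u x := lt_of_le_of_ne h (Ne.symm hxne)
  rcases lt_trichotomy p x with hpx | hpx | hpx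
  · have hc : ContinuousOn (fun t => σ * u t) (Icc p x) :=
      continuousOn_const.mul (hcont.mono (hIcc hp1))
    obtain ⟨z, hz, hz'⟩ := intermediate_value_Icc hpx.le hc
      (⟨hp2.le, hxpos.le⟩ : (0:ℝ) ∈ Icc (σ * u p) (σ * u x))
    have hz0 : σ * u z = 0 := hz'
    have hzb : z = b := by
      rcases mul_eq_zero.1 hz0 with h | h
      · rw [h, zero_mul] at hp2; exact absurd hp2 (lt_irrefl 0)
      · exact huniq z (hp1.trans_le hz.1) h
    have hfin : z < b := lt_of_le_of_lt hz.2 hxb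
    rw [hzb] at hfin; exact absurd hfin (lt_irrefl b)
  · exfalso; rw [hpx] at hp2; linarith
  · have hc : ContinuousOn (fun t => σ * u t) (Icc x p) :=
      continuousOn_const.mul (hcont.mono (hIcc hx))
    obtain ⟨z, hz, hz'⟩ := intermediate_value_Icc' hpx.le hc
      (⟨hp2.le, hxpos.le⟩ : (0:ℝ) ∈ Icc (σ * u p) (σ * u x))
    have hz0 : σ * u z = 0 := hz'
    have hzb : z = b := by
      rcases mul_eq_zero.1 hz0 with h | h
      · rw [h, zero_mul] at hp2; exact absurd hp2 (lt_irrefl 0)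
      · exact huniq z (hx.trans_le hz.1) h
    have hfin : z < b := lt_of_le_of_lt hz.2 hpb
    rw [hzb] at hfin; exact absurd hfin (lt_irrefl b)

/-- continuous with unique zero at `c` has constant sign on `(c,∞)`. -/
lemma const_sign {x₀ : ℝ} {u : ℝ → ℝ} {c : ℝ} (hc : x₀ < c)
    (hcont : ContinuousOn u (Ioi x₀))
    (huniq : ∀ x, x₀ < x → u x = 0 → x = c) :
    (∀ x ∈ Ioi c, 0 < u x) ∨ (∀ x ∈ Ioi c, u x < 0) := by
  have hnz : ∀ x ∈ Ioi c, u x ≠ 0 := fun x hx h =>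
    absurd (huniq x (hc.trans hx) h) (ne_of_gt hx)
  have key : ∀ x ∈ Ioi c, ∀ y ∈ Ioi c, 0 < u x → 0 < u y := by
    intro x hx y hy hux
    by_contra h
    push_neg at h
    have huy : u y < 0 := lt_of_le_of_ne h (hnz y hy)
    rcases lt_trichotomy x y with hxy | hxy | hxy
    · obtain ⟨z, hz, hz'⟩ := intermediate_value_Icc' hxy.le
        (hcont.mono (fun t ht => lt_of_lt_of_le (hc.trans hx) ht.1 : Icc x y ⊆ Ioi x₀))
        (⟨huy.le, hux.le⟩ : (0:ℝ) ∈ Icc (u y) (u x))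
      exact hnz z (lt_of_lt_of_le hx hz.1) hz'
    · exfalso; rw [hxy] at hux; linarith
    · obtain ⟨z, hz, hz'⟩ := intermediate_value_Icc hxy.le
        (hcont.mono (fun t ht => lt_of_lt_of_le (hc.trans hy) ht.1 : Icc y x ⊆ Ioi x₀))
        (⟨huy.le, hux.le⟩ : (0:ℝ) ∈ Icc (u y) (u x))
      exact hnz z (lt_of_lt_of_le hy hz.1) hz'
  rcases lt_or_ge 0 (u (c + 1)) with h | h
  · exact Or.inl (fun x hx => key (c+1) (by simp) x hx h)
  · have h' : u (c+1) < 0 := lt_of_le_of_ne h (hnz (c+1) (by simp))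
    refine Or.inr (fun x hx => ?_)
    by_contra hcon
    push_neg at hcon
    have h2 : 0 < u x := lt_of_le_of_ne hcon (Ne.symm (hnz x hx))
    have := key x hx (c+1) (by simp) h2
    linarith

/-- If `u → 0` at `∞`, `u' = v` on `(A,∞)`, and `v` is strictly monotone there,
then `v → 0` at `∞`. -/
lemma deriv_tendsto_zero_mono {u v : ℝ → ℝ} {A : ℝ}
    (huv : ∀ x ∈ Ioi A, HasDerivAt u (v x) x)
    (hmono : StrictMonoOn v (Ioi A))
    (hu0 : Tendsto u atTop (nhds 0)) :
    Tendsto v atTop (nhds 0) := by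
  have hbd : ∀ᶠ x in atTop, |u x| < 1 := by
    have := Metric.tendsto_atTop.1 hu0 1 one_pos
    obtain ⟨N, hN⟩ := this
    filter_upwards [eventually_ge_atTop N] with x hx
    simpa [Real.dist_eq] using hN x hx
  obtain ⟨N, hN⟩ := eventually_atTop.1 hbd
  -- step 1 : v ≤ 0 on (A, ∞)
  have hle : ∀ c ∈ Ioi A, v c ≤ 0 := by
    intro c hc
    by_contra h
    push_neg at h
    set x := max N (c + (2 + |u c|) / v c) + 1 with hx
    have hxN : N ≤ x := by
      have := le_max_left N (c + (2 + |u c|) / v c); simp only [hx]; linarith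
    have hxc : c < x := by
      have h1 : 0 < (2 + |u c|) / v c := div_pos (by positivity) h
      have := le_max_right N (c + (2 + |u c|) / v c)
      simp only [hx]; linarith
    have hsub : Icc c x ⊆ Ioi A := fun t ht => lt_of_lt_of_le hc ht.1
    obtain ⟨ξ, hξ, hξ'⟩ := exists_hasDerivAt_eq_slope u v hxc
      (fun t ht => (huv t (hsub ht)).continuousAt.continuousWithinAt)
      (fun t ht => huv t (hsub ⟨ht.1.le, ht.2.le⟩))
    have hvξ : v c < v ξ := hmono hc (lt_of_lt_of_le hc hξ.1.le) hξ.1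
    have hslope : (u x - u c) / (x - c) > v c := by rw [← hξ']; exact hvξ
    have hxcpos : (0:ℝ) < x - c := by linarith
    have h1 : v c * (x - c) < u x - u c := (lt_div_iff₀ hxcpos).1 hslope
    have h2 : v c * (x - c) ≥ 2 + |u c| := by
      have hxge : x - c ≥ (2 + |u c|) / v c := by
        have := le_max_right N (c + (2 + |u c|) / v c)
        simp only [hx]; linarith
      calc v c * (x - c) ≥ v c * ((2 + |u c|) / v c) := by
            apply mul_le_mul_of_nonneg_left hxge h.le
        _ = 2 + |u c| := by field_simp
    have h3 : |u x| < 1 := hN x hxN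
    have h4 : u c ≥ -|u c| := neg_abs_le (u c)
    have := abs_lt.1 h3
    linarith
  -- step 2 and conclusion
  rw [Metric.tendsto_atTop]
  intro ε hε
  have hex : ∃ c ∈ Ioi A, -ε < v c := by
    by_contra h
    push_neg at h
    set c := A + 1 with hc
    have hcA : c ∈ Ioi A := by simp [hc]
    set x := max N (c + (2 + |u c|) / ε) + 1 with hx
    have hxN : N ≤ x := by
      have := le_max_left N (c + (2 + |u c|) / ε); simp only [hx]; linarith
    have hxc : c < x := by
      have h1 : 0 < (2 + |u c|) / ε := div_pos (by positivity) hε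
      have := le_max_right N (c + (2 + |u c|) / ε)
      simp only [hx]; linarith
    have hsub : Icc c x ⊆ Ioi A := fun t ht => lt_of_lt_of_le hcA ht.1
    obtain ⟨ξ, hξ, hξ'⟩ := exists_hasDerivAt_eq_slope u v hxc
      (fun t ht => (huv t (hsub ht)).continuousAt.continuousWithinAt)
      (fun t ht => huv t (hsub ⟨ht.1.le, ht.2.le⟩))
    have hvξ : v ξ ≤ -ε := h ξ (lt_of_lt_of_le hcA hξ.1.le)
    have hxcpos : (0:ℝ) < x - c := by linarith
    have h1 : u x - u c ≤ -ε * (x - c) := by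
      have hsl : (u x - u c) / (x - c) ≤ -ε := by rw [← hξ']; exact hvξ
      have := (div_le_iff₀ hxcpos).1 hsl
      linarith
    have h2 : ε * (x - c) ≥ 2 + |u c| := by
      have hxge : x - c ≥ (2 + |u c|) / ε := by
        have := le_max_right N (c + (2 + |u c|) / ε)
        simp only [hx]; linarith
      calc ε * (x - c) ≥ ε * ((2 + |u c|) / ε) := by
            apply mul_le_mul_of_nonneg_left hxge hε.le
        _ = 2 + |u c| := by field_simp
    have h3 : |u x| < 1 := hN x hxN
    have h4 : u c ≤ |u c| := le_abs_self (u c)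
    have := abs_lt.1 h3
    nlinarith
  obtain ⟨c, hcA, hcv⟩ := hex
  refine ⟨c + 1, fun x hx => ?_⟩
  have hcx : c < x := by linarith
  have hvx1 : v c < v x := hmono hcA (hcA.trans hcx) hcx
  have hvx2 : v x ≤ 0 := hle x (hcA.trans hcx)
  rw [Real.dist_eq, sub_zero, abs_lt]
  constructor <;> [linarith; linarith]

/-- The central combinatorial lemma: if `w`, `w'`, `w''` each have a single
sign change (with alternating orientations), then so does `w - w'`. -/
lemma key {x₀ σ : ℝ} {w : ℝ → ℝ} {b c d : ℝ}
    (hw1 : ∀ x ∈ Ioi x₀, DifferentiableAt ℝ w x)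
    (hw2 : ∀ x ∈ Ioi x₀, DifferentiableAt ℝ (deriv w) x)
    (hb : Pat x₀ σ w b) (hc : Pat x₀ (-σ) (deriv w) c)
    (hd : Pat x₀ σ (deriv (deriv w)) d) :
    ∃ z, b < z ∧ z < c ∧ Pat x₀ σ (fun x => w x - deriv w x) z := by
  obtain ⟨hbx, hbneg, hbz, hbpos⟩ := hb
  obtain ⟨hcx, hcneg, hcz, hcpos⟩ := hc
  obtain ⟨hdx, hdneg, hdz, hdpos⟩ := hd
  have hσ : σ ≠ 0 := by
    intro h
    have := hbpos (b+1) (by linarith)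
    rw [h, zero_mul] at this
    exact absurd this (lt_irrefl 0)
  have hwcont : ContinuousOn w (Ioi x₀) := fun x hx =>
    (hw1 x hx).continuousAt.continuousWithinAt
  have hw'cont : ContinuousOn (deriv w) (Ioi x₀) := fun x hx =>
    (hw2 x hx).continuousAt.continuousWithinAt
  -- b < c
  have hbc : b < c := by
    by_contra h
    push_neg at h
    have h1 : -σ * w b < -σ * w (b+1) := by
      apply mono_aux (by linarith : b < b + 1)
        (hwcont.mono (fun t ht => lt_of_lt_of_le hbx ht.1))
      intro x hx
      exact hcpos x (lt_of_le_of_lt h hx.1)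
    rw [hbz, mul_zero] at h1
    have h2 := hbpos (b+1) (by linarith)
    nlinarith
  -- c < d
  have hcd : c < d := by
    by_contra h
    push_neg at h
    have h1 : σ * deriv w c < σ * deriv w (c+1) := by
      apply mono_aux (by linarith : c < c + 1)
        (hw'cont.mono (fun t ht => lt_of_lt_of_le hcx ht.1))
      intro x hx
      exact hdpos x (lt_of_le_of_lt h hx.1)
    rw [hcz, mul_zero] at h1
    have h2 := hcpos (c+1) (by linarith)
    nlinarith
  set v : ℝ → ℝ := fun x => w x - deriv w x with hv
  have hvd : ∀ x ∈ Ioi x₀, deriv v x = deriv w x - deriv (deriv w) x := fun x hx =>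
    deriv_sub (hw1 x hx) (hw2 x hx)
  have hvcont : ContinuousOn v (Ioi x₀) := hwcont.sub hw'cont
  have A1 : ∀ x, x₀ < x → x ≤ b → σ * v x < 0 := by
    intro x hx hxb
    have h1 : 0 < σ * deriv w x := by
      have := hcneg x hx (lt_of_le_of_lt hxb hbc)
      nlinarith
    have h2 : σ * w x ≤ 0 := by
      rcases lt_or_eq_of_le hxb with h | h
      · exact (hbneg x hx h).le
      · rw [h, hbz, mul_zero]
    have : σ * v x = σ * w x - σ * deriv w x := by simp [hv]; ring
    linarith
  have A2 : ∀ x, c ≤ x → 0 < σ * v x := by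
    intro x hxc
    have h1 : 0 < σ * w x := hbpos x (lt_of_lt_of_le hbc hxc)
    have h2 : σ * deriv w x ≤ 0 := by
      rcases lt_or_eq_of_le hxc with h | h
      · have := hcpos x h; nlinarith
      · rw [← h, hcz, mul_zero]
    have : σ * v x = σ * w x - σ * deriv w x := by simp [hv]; ring
    linarith
  have A3 : ∀ x, b < x → x < c → 0 < σ * deriv v x := by
    intro x hx1 hx2
    have hxI : x ∈ Ioi x₀ := hbx.trans hx1
    have h1 : 0 < σ * deriv w x := by
      have := hcneg x hxI hx2
      nlinarith
    have h2 : σ * deriv (deriv w) x < 0 := hdneg x hxI (hx2.trans hcd)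
    rw [hvd x hxI, mul_sub]
    linarith
  -- IVT on [b,c]
  have hvb : σ * v b < 0 := A1 b hbx le_rfl
  have hvc : 0 < σ * v c := A2 c le_rfl
  have hIccsub : Icc b c ⊆ Ioi x₀ := fun t ht => lt_of_lt_of_le hbx ht.1
  obtain ⟨z, hz, hz0⟩ := intermediate_value_Icc hbc.le
    (continuousOn_const.mul (hvcont.mono hIccsub))
    (⟨hvb.le, hvc.le⟩ : (0:ℝ) ∈ Icc (σ * v b) (σ * v c))
  have hz0' : σ * v z = 0 := hz0
  have hvz : v z = 0 := by
    rcases mul_eq_zero.1 hz0' with h | h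
    · exact absurd h hσ
    · exact h
  have hzb : b < z := by
    rcases lt_or_eq_of_le hz.1 with h | h
    · exact h
    · exfalso; rw [← h] at hz0'; linarith
  have hzc : z < c := by
    rcases lt_or_eq_of_le hz.2 with h | h
    · exact h
    · exfalso; rw [h] at hz0'; linarith
  have hzx : x₀ < z := hbx.trans hzb
  refine ⟨z, hzb, hzc, hzx, ?_, hvz, ?_⟩
  · intro x hx hxz
    rcases le_or_gt x b with h | h
    · exact A1 x hx h
    · have h1 : σ * v x < σ * v z := by
        apply mono_aux hxz (hvcont.mono (fun t ht => lt_of_lt_of_le hx ht.1))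
        intro t ht
        exact A3 t (h.trans ht.1) (ht.2.trans hzc)
      rw [hvz, mul_zero] at h1
      exact h1
  · intro x hx
    rcases lt_or_ge x c with h | h
    · have h1 : σ * v z < σ * v x := by
        apply mono_aux hx (hvcont.mono (fun t ht => lt_of_lt_of_le hzx ht.1))
        intro t ht
        exact A3 t (hzb.trans ht.1) (ht.2.trans h)
      rw [hvz, mul_zero] at h1
      exact h1
    · exact A2 x h

lemma deriv_congr_Ioi {x₀ : ℝ} {u v : ℝ → ℝ} (h : EqOn u v (Ioi x₀)) :
    EqOn (deriv u) (deriv v) (Ioi x₀) := fun _ hx =>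
  Filter.EventuallyEq.deriv_eq (Filter.eventuallyEq_of_mem (isOpen_Ioi.mem_nhds hx) h)

lemma iterWithin_eq {x₀ : ℝ} (u : ℝ → ℝ) (m : ℕ) :
    ∀ x ∈ Ioi x₀, iteratedDerivWithin m u (Ioi x₀) x = deriv^[m] u x := by
  induction m with
  | zero => intro x _; simp
  | succ m ih =>
    intro x hx
    rw [iteratedDerivWithin_succ,
      derivWithin_of_isOpen isOpen_Ioi hx, Function.iterate_succ_apply']
    exact deriv_congr_Ioi (fun t ht => ih t ht) hx

lemma contDiffOn_iter {x₀ : ℝ} {u : ℝ → ℝ} (hu : ContDiffOn ℝ (⊤ : ℕ∞) u (Ioi x₀)) (m : ℕ) :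
    ContDiffOn ℝ (⊤ : ℕ∞) (deriv^[m] u) (Ioi x₀) := by
  induction m with
  | zero => exact hu
  | succ m ih =>
    rw [Function.iterate_succ_apply']
    exact ih.deriv_of_isOpen isOpen_Ioi (by simp)

lemma diffAt_of {x₀ : ℝ} {u : ℝ → ℝ} (hu : ContDiffOn ℝ (⊤ : ℕ∞) u (Ioi x₀)) :
    ∀ x ∈ Ioi x₀, DifferentiableAt ℝ u x := fun x hx =>
  (hu.differentiableOn (by simp)).differentiableAt (isOpen_Ioi.mem_nhds hx)

lemma iter_deriv_sub {x₀ : ℝ} {u v : ℝ → ℝ} (hu : ContDiffOn ℝ (⊤ : ℕ∞) u (Ioi x₀))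
    (hv : ContDiffOn ℝ (⊤ : ℕ∞) v (Ioi x₀)) (m : ℕ) :
    EqOn (deriv^[m] (fun x => u x - v x))
      (fun x => deriv^[m] u x - deriv^[m] v x) (Ioi x₀) := by
  induction m with
  | zero => intro x _; simp
  | succ m ih =>
    intro x hx
    rw [Function.iterate_succ_apply']
    have h1 : deriv (deriv^[m] (fun x => u x - v x)) x
        = deriv (fun x => deriv^[m] u x - deriv^[m] v x) x := deriv_congr_Ioi ih hx
    rw [h1, deriv_fun_sub (diffAt_of (contDiffOn_iter hu m) x hx)
      (diffAt_of (contDiffOn_iter hv m) x hx)]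
    simp [Function.iterate_succ_apply']

/-- derivative of `x ↦ exp (-x) * u x`. -/
lemma expTilt_hasDeriv {u : ℝ → ℝ} {y : ℝ} (hu : DifferentiableAt ℝ u y) :
    HasDerivAt (fun x => Real.exp (-x) * u x)
      (-Real.exp (-y) * u y + Real.exp (-y) * deriv u y) y := by
  have h1 : HasDerivAt (fun x : ℝ => Real.exp (-x)) (-Real.exp (-y)) y := by
    have := (Real.hasDerivAt_exp (-y)).comp y (hasDerivAt_neg y)
    simpa [Function.comp_def] using this
  exact h1.mul hu.hasDerivAt

/-- Base case: `f - f'` has a single sign change (negative then positive). -/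
lemma base0 {f : ℝ → ℝ} {x₀ a₁ a₂ : ℝ}
    (hpos : ∀ x ∈ Ioi x₀, 0 < f x)
    (hsm : ContDiffOn ℝ (⊤ : ℕ∞) f (Ioi x₀))
    (hlim0 : Tendsto f (nhdsWithin x₀ (Ioi x₀)) (nhds 0))
    (hb1 : Pat x₀ (-1) (deriv f) a₁)
    (hb2 : Pat x₀ 1 (deriv (deriv f)) a₂) :
    ∃ z, Pat x₀ 1 (fun x => f x - deriv f x) z := by
  obtain ⟨h1x, h1neg, h1z, h1pos⟩ := hb1
  obtain ⟨h2x, h2neg, h2z, h2pos⟩ := hb2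
  have hdf : ∀ x ∈ Ioi x₀, DifferentiableAt ℝ f x := diffAt_of hsm
  have hdf1 : ∀ x ∈ Ioi x₀, DifferentiableAt ℝ (deriv f) x :=
    diffAt_of (hsm.deriv_of_isOpen isOpen_Ioi (by simp))
  have hfc : ContinuousOn f (Ioi x₀) := fun x hx =>
    (hdf x hx).continuousAt.continuousWithinAt
  have hf1c : ContinuousOn (deriv f) (Ioi x₀) := fun x hx =>
    (hdf1 x hx).continuousAt.continuousWithinAt
  -- a₁ < a₂
  have h12 : a₁ < a₂ := by
    by_contra h
    push_neg at h
    have hmono : (1:ℝ) * deriv f a₁ < 1 * deriv f (a₁+1) := by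
      apply mono_aux (by linarith : a₁ < a₁ + 1)
        (hf1c.mono (fun t ht => lt_of_lt_of_le h1x ht.1))
      intro x hx
      have := h2pos x (lt_of_le_of_lt h hx.1)
      linarith
    rw [h1z] at hmono
    have := h1pos (a₁+1) (by linarith)
    linarith
  set v : ℝ → ℝ := fun x => f x - deriv f x with hv
  have hvcont : ContinuousOn v (Ioi x₀) := hfc.sub hf1c
  have A2 : ∀ x, a₁ ≤ x → 0 < 1 * v x := by
    intro x hx
    have hxI : x₀ < x := lt_of_lt_of_le h1x hx
    have hf : 0 < f x := hpos x hxI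
    have hd : deriv f x ≤ 0 := by
      rcases lt_or_eq_of_le hx with h | h
      · have := h1pos x h; linarith
      · rw [← h, h1z]
    simp only [hv]; linarith
  have A3 : ∀ x, x₀ < x → x < a₁ → 0 < deriv v x := by
    intro x hx1 hx2
    have hd : deriv v x = deriv f x - deriv (deriv f) x :=
      deriv_sub (hdf x hx1) (hdf1 x hx1)
    have hd1 : 0 < deriv f x := by have := h1neg x hx1 hx2; linarith
    have hd2 : deriv (deriv f) x < 0 := by
      have := h2neg x hx1 (hx2.trans h12); linarith
    rw [hd]; linarith
  -- negative point via exponential tilt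
  have hnegpt : ∃ p, x₀ < p ∧ 1 * v p < 0 := by
    set φ : ℝ → ℝ := fun x => Real.exp (-x) * f x with hφ
    have hφd : ∀ y ∈ Ioi x₀, HasDerivAt φ
        (-Real.exp (-y) * f y + Real.exp (-y) * deriv f y) y := fun y hy =>
      expTilt_hasDeriv (hdf y hy)
    have hφlim : Tendsto φ (nhdsWithin x₀ (Ioi x₀)) (nhds 0) := by
      have h1 : Tendsto (fun x => Real.exp (-x)) (nhdsWithin x₀ (Ioi x₀))
          (nhds (Real.exp (-x₀))) :=
        ((Real.continuous_exp.comp continuous_neg).tendsto x₀).mono_left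
          nhdsWithin_le_nhds
      have := h1.mul hlim0
      rw [mul_zero] at this
      exact this
    set x := x₀ + 1 with hxdef
    have hxI : x₀ < x := by simp [hxdef]
    have hφx : 0 < φ x := mul_pos (Real.exp_pos _) (hpos x hxI)
    have hev : ∀ᶠ t in nhdsWithin x₀ (Ioi x₀), φ t < φ x :=
      hφlim.eventually_lt_const hφx
    have hmem : Ioo x₀ x ∈ nhdsWithin x₀ (Ioi x₀) :=
      Ioo_mem_nhdsGT_of_mem ⟨le_rfl, hxI⟩
    have hne : (nhdsWithin x₀ (Ioi x₀)).NeBot := nhdsGT_neBot x₀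
    obtain ⟨t, ht1, ht2⟩ := (hev.and (eventually_of_mem hmem (fun y hy => hy))).exists
    have hsub : Icc t x ⊆ Ioi x₀ := fun y hy => lt_of_lt_of_le ht2.1 hy.1
    obtain ⟨ξ, hξ, hξ'⟩ := mvt_pos ht2.2
      (fun y hy => (hφd y (hsub hy)).continuousAt.continuousWithinAt)
      (fun y hy => (hφd y (hsub ⟨hy.1.le, hy.2.le⟩)).differentiableAt) ht1
    have hξI : x₀ < ξ := ht2.1.trans hξ.1
    have hdφ : deriv φ ξ = -Real.exp (-ξ) * f ξ + Real.exp (-ξ) * deriv f ξ :=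
      (hφd ξ hξI).deriv
    refine ⟨ξ, hξI, ?_⟩
    rw [hdφ] at hξ'
    have hexp := Real.exp_pos (-ξ)
    simp only [hv, one_mul]
    nlinarith
  -- assemble
  obtain ⟨p, hpI, hpneg⟩ := hnegpt
  have hpa : p < a₁ := by
    by_contra h
    push_neg at h
    have := A2 p h
    linarith
  have hva : 0 < 1 * v a₁ := A2 a₁ le_rfl
  obtain ⟨z, hz, hz0⟩ := intermediate_value_Icc hpa.le
    (continuousOn_const.mul (hvcont.mono (fun y hy => lt_of_lt_of_le hpI hy.1)))
    (⟨by linarith, by linarith⟩ : (0:ℝ) ∈ Icc (1 * v p) (1 * v a₁))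
  have hz0' : (1:ℝ) * v z = 0 := hz0
  have hvz : v z = 0 := by linarith
  have hzI : x₀ < z := lt_of_lt_of_le hpI hz.1
  have hza : z < a₁ := by
    rcases lt_or_eq_of_le hz.2 with h | h
    · exact h
    · exfalso; rw [h] at hz0'; linarith
  refine ⟨z, hzI, ?_, hvz, ?_⟩
  · intro y hy1 hy2
    have h1 : (1:ℝ) * v y < 1 * v z := by
      apply mono_aux hy2 (hvcont.mono (fun s hs => lt_of_lt_of_le hy1 hs.1))
      intro s hs
      have := A3 s (hy1.trans hs.1) (hs.2.trans hza)
      linarith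
    rw [hvz, mul_zero] at h1
    exact h1
  · intro y hy
    rcases lt_or_ge y a₁ with h | h
    · have h1 : (1:ℝ) * v z < 1 * v y := by
        apply mono_aux hy (hvcont.mono (fun s hs => lt_of_lt_of_le hzI hs.1))
        intro s hs
        have := A3 s (hzI.trans hs.1) (hs.2.trans h)
        linarith
      rw [hvz, mul_zero] at h1
      exact h1
    · exact A2 y h

lemma main {f : ℝ → ℝ} {x₀ : ℝ}
    (hpos : ∀ x ∈ Ioi x₀, 0 < f x)
    (hsm : ContDiffOn ℝ (⊤ : ℕ∞) f (Ioi x₀))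
    (hlim0 : Tendsto f (nhdsWithin x₀ (Ioi x₀)) (nhds 0))
    (hlim : Tendsto f atTop (nhds 0))
    (huniq : ∀ n : ℕ, 1 ≤ n → ∃! x, x ∈ Ioi x₀ ∧ deriv^[n] f x = 0) :
    ∀ n : ℕ, 1 ≤ n → ∀ m : ℕ,
      ∃ z, Pat x₀ ((-1)^m) (deriv^[m] ((fun u x => u x - deriv u x)^[n] f)) z := by
  set F : ℕ → ℝ → ℝ := fun m => deriv^[m] f with hF
  have Fsucc : ∀ m, F (m+1) = deriv (F m) := fun m => Function.iterate_succ_apply' deriv m f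
  have Fsm : ∀ m, ContDiffOn ℝ (⊤ : ℕ∞) (F m) (Ioi x₀) := fun m => contDiffOn_iter hsm m
  have Fdiff : ∀ m, ∀ x ∈ Ioi x₀, DifferentiableAt ℝ (F m) x := fun m => diffAt_of (Fsm m)
  have Fcont : ∀ m, ContinuousOn (F m) (Ioi x₀) := fun m x hx =>
    (Fdiff m x hx).continuousAt.continuousWithinAt
  have Fuq : ∀ m, 1 ≤ m → ∃ a, x₀ < a ∧ F m a = 0 ∧
      (∀ x, x₀ < x → F m x = 0 → x = a) := by
    intro m hm
    obtain ⟨a, ⟨haI, haz⟩, hau⟩ := huniq m hm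
    exact ⟨a, haI, haz, fun x hx h => hau x ⟨hx, h⟩⟩
  -- limits at infinity of all derivatives
  have T : ∀ m, Tendsto (F m) atTop (nhds 0) := by
    intro m
    induction m with
    | zero => exact hlim
    | succ m ih =>
      obtain ⟨c, hcI, hcz, hcu⟩ := Fuq (m+2) (by omega)
      have hsub : Ioi c ⊆ Ioi x₀ := fun t ht => hcI.trans ht
      rcases const_sign hcI (Fcont (m+2)) hcu with hs | hs
      · -- F (m+1) strictly monotone on Ioi c
        have hmono : StrictMonoOn (F (m+1)) (Ioi c) := by
          apply strictMonoOn_of_deriv_pos (convex_Ioi c) ((Fcont (m+1)).mono hsub)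
          intro x hx
          rw [interior_Ioi] at hx
          rw [← Fsucc (m+1)]
          exact hs x hx
        apply deriv_tendsto_zero_mono (u := F m) (A := c) ?_ hmono ih
        intro x hx
        have := (Fdiff m x (hsub hx)).hasDerivAt
        rw [← Fsucc m] at this
        exact this
      · have hmono : StrictMonoOn (fun x => -(F (m+1) x)) (Ioi c) := by
          apply strictMonoOn_of_deriv_pos (convex_Ioi c)
            (((Fcont (m+1)).mono hsub).neg)
          intro x hx
          rw [interior_Ioi] at hx
          rw [deriv.neg]
          rw [← Fsucc (m+1)]
          have := hs x hx
          linarith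
        have hres : Tendsto (fun x => -(F (m+1) x)) atTop (nhds 0) := by
          apply deriv_tendsto_zero_mono (u := fun x => -(F m x)) (A := c) ?_ hmono
          · have := ih.neg; rw [neg_zero] at this; exact this
          · intro x hx
            have h2 := ((Fdiff m x (hsub hx)).hasDerivAt).neg
            rw [← Fsucc m] at h2
            exact h2
        have := hres.neg
        rw [neg_zero] at this
        simpa using this
  -- sign patterns of all derivatives of f
  have S : ∀ m, 1 ≤ m → ∃ b, Pat x₀ ((-1)^m) (F m) b := by
    intro m hm
    induction m with
    | zero => omega
    | succ m ih =>
      obtain ⟨a, haI, haz, hau⟩ := Fuq (m+1) (by omega)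
      rcases Nat.eq_zero_or_pos m with rfl | hm1
      · -- m+1 = 1 : base case for f'
        refine ⟨a, ?_⟩
        apply pat_of haI haz hau (Fcont 1)
        · -- positive point of deriv f near x₀
          set x := x₀ + 1 with hxdef
          have hxI : x₀ < x := by simp [hxdef]
          have hfx : 0 < f x := hpos x hxI
          have hev : ∀ᶠ t in nhdsWithin x₀ (Ioi x₀), f t < f x :=
            hlim0.eventually_lt_const hfx
          have hmem : Ioo x₀ x ∈ nhdsWithin x₀ (Ioi x₀) :=
            Ioo_mem_nhdsGT_of_mem ⟨le_rfl, hxI⟩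
          have hne : (nhdsWithin x₀ (Ioi x₀)).NeBot := nhdsGT_neBot x₀
          obtain ⟨t, ht1, ht2⟩ := (hev.and (eventually_of_mem hmem (fun y hy => hy))).exists
          have hsub : Icc t x ⊆ Ioi x₀ := fun y hy => lt_of_lt_of_le ht2.1 hy.1
          obtain ⟨ξ, hξ, hξ'⟩ := mvt_pos ht2.2 ((Fcont 0).mono hsub)
            (fun y hy => Fdiff 0 y (hsub ⟨hy.1.le, hy.2.le⟩)) ht1
          refine ⟨ξ, ht2.1.trans hξ.1, ?_⟩
          have h5 : 0 < F (0+1) ξ := by rw [Fsucc 0]; exact hξ'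
          have hc : ((-1:ℝ))^(0+1) = -1 := by norm_num
          rw [hc]; linarith
        · -- negative tail points of deriv f
          intro X
          obtain ⟨ξ, hξ1, hξ2, hξ3⟩ := tail_sign (σ := 1) (A := x₀) (fun x hx => Fdiff 0 x hx)
            (fun x hx => by simpa [hF] using hpos x hx) hlim X
          refine ⟨ξ, hξ1, ?_⟩
          have h5 : F (0+1) ξ < 0 := by rw [Fsucc 0]; linarith
          have hc : ((-1:ℝ))^(0+1) = -1 := by norm_num
          rw [hc]; linarith
      · -- inductive step
        obtain ⟨b, hPat⟩ := ih hm1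
        obtain ⟨hbx, hbneg, hbz, hbpos⟩ := hPat
        have hsgn : ((-1:ℝ))^(m+1) = -((-1:ℝ))^m := by rw [pow_succ]; ring
        apply Exists.intro a
        apply pat_of haI haz hau (Fcont (m+1))
        · obtain ⟨ξ, hξ1, hξ2, hξ3⟩ := cross_sign hbx (Fdiff m) hbneg hbz
          refine ⟨ξ, hξ1, ?_⟩
          rw [← Fsucc m] at *
          rw [hsgn]
          nlinarith
        · intro X
          obtain ⟨ξ, hξ1, hξ2, hξ3⟩ := tail_sign (σ := (-1:ℝ)^m) (A := b)
            (fun x hx => Fdiff m x (hbx.trans hx)) hbpos (T m) X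
          refine ⟨ξ, hξ1, ?_⟩
          rw [← Fsucc m] at *
          rw [hsgn]
          nlinarith
  -- the H-induction
  set Φ : (ℝ → ℝ) → ℝ → ℝ := fun u x => u x - deriv u x with hΦ
  have Hsm : ∀ n, ContDiffOn ℝ (⊤ : ℕ∞) (Φ^[n] f) (Ioi x₀) := by
    intro n
    induction n with
    | zero => exact hsm
    | succ n ihn =>
      rw [Function.iterate_succ_apply']
      exact ihn.sub (ihn.deriv_of_isOpen isOpen_Ioi (by simp))
  have hsgn1 : ∀ m : ℕ, ((-1:ℝ))^(m+1) = -((-1:ℝ))^m := by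
    intro m; rw [pow_succ]; ring
  have hsgn2 : ∀ m : ℕ, ((-1:ℝ))^(m+2) = ((-1:ℝ))^m := by
    intro m; rw [pow_succ, pow_succ]; ring
  -- one Φ-step, assuming full pattern data for u
  have step : ∀ u : ℝ → ℝ, ContDiffOn ℝ (⊤ : ℕ∞) u (Ioi x₀) →
      (∀ m, ∃ z, Pat x₀ ((-1)^m) (deriv^[m] u) z) →
      (∀ m, ∃ z, Pat x₀ ((-1)^m) (deriv^[m] (Φ u)) z) := by
    intro u hu hP m
    have hEq : EqOn (deriv^[m] (Φ u))
        (fun x => deriv^[m] u x - deriv^[m] (deriv u) x) (Ioi x₀) :=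
      iter_deriv_sub hu (hu.deriv_of_isOpen isOpen_Ioi (by simp)) m
    obtain ⟨b, hPb⟩ := hP m
    obtain ⟨c, hPc⟩ := hP (m+1)
    obtain ⟨d, hPd⟩ := hP (m+2)
    have hw1 : ∀ x ∈ Ioi x₀, DifferentiableAt ℝ (deriv^[m] u) x :=
      diffAt_of (contDiffOn_iter hu m)
    have e1 : deriv^[m+1] u = deriv (deriv^[m] u) := Function.iterate_succ_apply' deriv m u
    have e2 : deriv^[m+2] u = deriv (deriv (deriv^[m] u)) := by
      rw [Function.iterate_succ_apply' deriv (m+1) u, e1]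
    have hw2 : ∀ x ∈ Ioi x₀, DifferentiableAt ℝ (deriv (deriv^[m] u)) x := by
      rw [← e1]; exact diffAt_of (contDiffOn_iter hu (m+1))
    rw [hsgn1 m, e1] at hPc
    rw [hsgn2 m, e2] at hPd
    obtain ⟨z, _, _, hPz⟩ := key hw1 hw2 hPb hPc hPd
    have e3 : (fun x => deriv^[m] u x - deriv^[m] (deriv u) x)
        = (fun x => deriv^[m] u x - deriv (deriv^[m] u) x) := by
      rw [← Function.iterate_succ_apply deriv m u, e1]
    rw [e3] at hEq
    exact ⟨z, hPz.congr hEq.symm⟩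
  intro n hn
  induction n, hn using Nat.le_induction with
  | base =>
    -- n = 1
    intro m
    have hEq : EqOn (deriv^[m] (Φ f))
        (fun x => deriv^[m] f x - deriv^[m] (deriv f) x) (Ioi x₀) :=
      iter_deriv_sub hsm (hsm.deriv_of_isOpen isOpen_Ioi (by simp)) m
    have e0 : Φ^[1] f = Φ f := by rw [Function.iterate_one]
    rcases Nat.eq_zero_or_pos m with rfl | hm1
    · -- m = 0 : base0
      obtain ⟨a₁, hP1⟩ := S 1 le_rfl
      obtain ⟨a₂, hP2⟩ := S 2 (by omega)
      have hb1 : Pat x₀ (-1) (deriv f) a₁ := by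
        have e : F 1 = deriv f := by rw [Fsucc 0]; rfl
        rw [e] at hP1
        simpa using hP1
      have hb2 : Pat x₀ 1 (deriv (deriv f)) a₂ := by
        have e : F 2 = deriv (deriv f) := by
          rw [Fsucc 1, Fsucc 0]; rfl
        rw [e] at hP2
        simpa using hP2
      obtain ⟨z, hz⟩ := base0 hpos hsm hlim0 hb1 hb2
      refine ⟨z, ?_⟩
      rw [e0]
      simpa using hz
    · -- m ≥ 1
      obtain ⟨b, hPb⟩ := S m hm1
      obtain ⟨c, hPc⟩ := S (m+1) (by omega)
      obtain ⟨d, hPd⟩ := S (m+2) (by omega)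
      have hw1 : ∀ x ∈ Ioi x₀, DifferentiableAt ℝ (F m) x := Fdiff m
      have hw2 : ∀ x ∈ Ioi x₀, DifferentiableAt ℝ (deriv (F m)) x := by
        rw [← Fsucc m]; exact Fdiff (m+1)
      rw [hsgn1 m, Fsucc m] at hPc
      rw [hsgn2 m, Fsucc (m+1), Fsucc m] at hPd
      obtain ⟨z, _, _, hPz⟩ := key hw1 hw2 hPb hPc hPd
      have e3 : (fun x => deriv^[m] f x - deriv^[m] (deriv f) x)
          = (fun x => F m x - deriv (F m) x) := by
        rw [← Function.iterate_succ_apply deriv m f]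
        have : deriv^[m+1] f = deriv (F m) := Fsucc m
        rw [this]
      rw [e3] at hEq
      rw [e0]
      exact ⟨z, hPz.congr hEq.symm⟩
  | succ n hn1 ihn =>
    have := step (Φ^[n] f) (Hsm n) ihn
    intro m
    rw [Function.iterate_succ_apply']
    exact this m

lemma phi_smooth {f : ℝ → ℝ} {x₀ : ℝ} (hsm : ContDiffOn ℝ (⊤ : ℕ∞) f (Ioi x₀)) (n : ℕ) :
    ContDiffOn ℝ (⊤ : ℕ∞) ((fun u x => u x - deriv u x)^[n] f) (Ioi x₀) := by
  induction n with
  | zero => exact hsm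
  | succ n ihn =>
    rw [Function.iterate_succ_apply']
    exact ihn.sub (ihn.deriv_of_isOpen isOpen_Ioi (by simp))

lemma tilt_formula {f : ℝ → ℝ} {x₀ : ℝ} (hsm : ContDiffOn ℝ (⊤ : ℕ∞) f (Ioi x₀)) (n : ℕ) :
    EqOn (deriv^[n] (fun x => Real.exp (-x) * f x))
      (fun x => (-1)^n * (Real.exp (-x) * (fun u x => u x - deriv u x)^[n] f x))
      (Ioi x₀) := by
  induction n with
  | zero => intro x _; simp
  | succ n ihn =>
    intro x hx
    rw [Function.iterate_succ_apply']
    have h1 : deriv (deriv^[n] (fun x => Real.exp (-x) * f x)) x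
        = deriv (fun y => (-1)^n * (Real.exp (-y) *
            (fun u x => u x - deriv u x)^[n] f y)) x := deriv_congr_Ioi ihn hx
    set u : ℝ → ℝ := (fun u x => u x - deriv u x)^[n] f with hu
    have hud : DifferentiableAt ℝ u x := diffAt_of (phi_smooth hsm n) x hx
    have h2 : HasDerivAt (fun y => Real.exp (-y) * u y)
        (-Real.exp (-x) * u x + Real.exp (-x) * deriv u x) x := expTilt_hasDeriv hud
    have h3 : deriv (fun y => Real.exp (-y) * u y) x
        = -Real.exp (-x) * u x + Real.exp (-x) * deriv u x := h2.deriv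
    rw [h1, deriv_const_mul_field, h3]
    have h4 : (fun v x => v x - deriv v x)^[n+1] f x = u x - deriv u x := by
      rw [Function.iterate_succ_apply', ← hu]
    show (-1:ℝ) ^ n * (-Real.exp (-x) * u x + Real.exp (-x) * deriv u x)
      = (-1) ^ (n + 1) * (Real.exp (-x) * (fun u x => u x - deriv u x)^[n + 1] f x)
    rw [h4, pow_succ]
    ring

end WhaleAux

/-- Exponential tilting preserves the whale shape: if `f` is whale-shaped with
support `[x0, inf)`, so is `x -> exp (-x) * f x`. -/
theorem whaleShaped_exp_tilt (f : ℝ → ℝ) (x₀ : ℝ)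
    (hf : IsWhaleShaped f x₀) :
    IsWhaleShaped (fun x => Real.exp (-x) * f x) x₀ := by
  obtain ⟨h1, h2, h3, h4, h5, h6⟩ := hf
  have huniq' : ∀ n : ℕ, 1 ≤ n → ∃! x, x ∈ Set.Ioi x₀ ∧ deriv^[n] f x = 0 := by
    intro n hn
    obtain ⟨x, ⟨hxI, hx0⟩, hxu⟩ := h6 n hn
    refine ⟨x, ⟨hxI, by rw [← WhaleAux.iterWithin_eq f n x hxI]; exact hx0⟩, ?_⟩
    rintro y ⟨hyI, hy0⟩
    exact hxu y ⟨hyI, by rw [WhaleAux.iterWithin_eq f n y hyI]; exact hy0⟩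
  have hmain := WhaleAux.main h2 h3 h4 h5 huniq'
  refine ⟨fun x hx => by show Real.exp (-x) * f x = 0; rw [h1 x hx, mul_zero],
    fun x hx => mul_pos (Real.exp_pos _) (h2 x hx), ?_, ?_, ?_, ?_⟩
  · exact ((Real.contDiff_exp.comp contDiff_neg).contDiffOn).mul h3
  · have hexp : Tendsto (fun x : ℝ => Real.exp (-x)) (nhdsWithin x₀ (Set.Ioi x₀))
        (nhds (Real.exp (-x₀))) :=
      ((Real.continuous_exp.comp continuous_neg).tendsto x₀).mono_left nhdsWithin_le_nhds
    have := hexp.mul h4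
    rw [mul_zero] at this
    exact this
  · have hexp : Tendsto (fun x : ℝ => Real.exp (-x)) atTop (nhds 0) :=
      Real.tendsto_exp_neg_atTop_nhds_zero
    have := hexp.mul h5
    rw [mul_zero] at this
    exact this
  · intro n hn
    obtain ⟨z, hPz⟩ := hmain n hn 0
    have hP : WhaleAux.Pat x₀ 1 ((fun u x => u x - deriv u x)^[n] f) z := by
      simpa using hPz
    have hzI : z ∈ Set.Ioi x₀ := hP.1
    refine ⟨z, ⟨hzI, ?_⟩, ?_⟩
    · have hform : deriv^[n] (fun x => Real.exp (-x) * f x) z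
          = (-1)^n * (Real.exp (-z) * (fun u x => u x - deriv u x)^[n] f z) :=
        WhaleAux.tilt_formula h3 n hzI
      rw [WhaleAux.iterWithin_eq _ n z hzI, hform, hP.2.2.1, mul_zero, mul_zero]
    · rintro y ⟨hyI, hy0⟩
      have hform : deriv^[n] (fun x => Real.exp (-x) * f x) y
          = (-1)^n * (Real.exp (-y) * (fun u x => u x - deriv u x)^[n] f y) :=
        WhaleAux.tilt_formula h3 n hyI
      rw [WhaleAux.iterWithin_eq _ n y hyI, hform] at hy0
      have hzero : (fun u x => u x - deriv u x)^[n] f y = 0 := by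
        have hne1 : ((-1:ℝ))^n ≠ 0 := pow_ne_zero _ (by norm_num)
        have hne2 : Real.exp (-y) ≠ 0 := Real.exp_ne_zero _
        rcases mul_eq_zero.1 hy0 with h | h
        · exact absurd h hne1
        · rcases mul_eq_zero.1 h with h' | h'
          · exact absurd h' hne2
          · exact h'
      exact hP.zero_iff y hyI hzero
end

section
/- For every n ≥ 0, the n-th derivative of the Cauchy density f(x) = 1/(π(1 + x²)) has exactly n real zeros, all simple. In particular the Cauchy density is bell-shaped. -/
open MeasureTheory Set Filter Real

/-!
Since `1 / (1 + x²) = -Im (x + i)⁻¹`, the `n`-th derivative of the Cauchy density is a nonzero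
multiple of `Im ((x + i)^(n+1))⁻¹`, whose sign is opposite to that of
`Im (x + i)^(n+1) = ‖x + i‖^(n+1) sin ((n+1) θ)` with `θ = arg (x + i)`. As `x` runs over `ℝ`,
`θ` runs bijectively over `(0, π)` (the inverse is `cot`), so the zeros correspond to the angles
`kπ/(n+1)`, `1 ≤ k ≤ n`. At such an angle `sin ((n+2) θ) = cos ((n+1) θ) sin θ = ± sin θ ≠ 0`,
so the zeros are simple.
-/

namespace Complex

theorem im_pow_eq_norm_pow_mul_sin (z : ℂ) (m : ℕ) :
    (z ^ m).im = ‖z‖ ^ m * Real.sin (m * arg z) := by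
  rw [← norm_mul_exp_arg_mul_I z, mul_pow, ← exp_nat_mul, ← ofReal_pow, ← mul_assoc,
    ← ofReal_natCast, ← ofReal_mul, im_ofReal_mul, exp_ofReal_mul_I_im, norm_mul_exp_arg_mul_I]

theorem ofReal_add_ne_zero {c : ℂ} (hc : c.im ≠ 0) (x : ℝ) : (x : ℂ) + c ≠ 0 :=
  fun h => hc (by simpa using congrArg im h)

theorem hasDerivAt_im_inv_pow_ofReal_add {c : ℂ} (hc : c.im ≠ 0) (m : ℕ) (x : ℝ) :
    HasDerivAt (fun y : ℝ => ((((y : ℂ) + c) ^ m)⁻¹).im)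
      (-m * ((((x : ℂ) + c) ^ (m + 1))⁻¹).im) x := by
  have hx := ofReal_add_ne_zero hc x
  have hC : HasDerivAt (fun z : ℂ => ((z + c) ^ m)⁻¹) (-m * (((x : ℂ) + c) ^ (m + 1))⁻¹) x := by
    refine ((((hasDerivAt_id (x : ℂ)).add_const c).fun_pow m).fun_inv
      (pow_ne_zero m hx)).congr_deriv ?_
    rcases m with _ | m
    · simp
    · simp only [id, Nat.add_sub_cancel]
      field_simp
      ring
  simpa [Function.comp_def] using imCLM.hasFDerivAt.comp_hasDerivAt x hC.comp_ofReal

theorem arg_ofReal_add_I_mem_Ioo (x : ℝ) : arg (x + I) ∈ Ioo 0 π := by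
  refine ⟨(arg_nonneg_iff.2 (by simp)).lt_of_ne fun h => ?_, arg_lt_pi_iff.2 (by simp)⟩
  simpa using (arg_eq_zero_iff.1 h.symm).2

theorem cot_arg_ofReal_add_I (x : ℝ) : Real.cot (arg (x + I)) = x := by
  have hx : (x : ℂ) + I ≠ 0 := ofReal_add_ne_zero (by simp) x
  have hnorm : ‖(x : ℂ) + I‖ ≠ 0 := norm_ne_zero_iff.2 hx
  rw [Real.cot_eq_cos_div_sin, cos_arg hx, sin_arg]
  field_simp
  simp

theorem arg_ofReal_cot_add_I {θ : ℝ} (hθ : θ ∈ Ioo 0 π) : arg (Real.cot θ + I) = θ := by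
  have hsin : 0 < Real.sin θ := Real.sin_pos_of_pos_of_lt_pi hθ.1 hθ.2
  have hpolar : (Real.cot θ : ℂ) + I = ((Real.sin θ)⁻¹ : ℝ) * (cos θ + sin θ * I) := by
    have : sin (θ : ℂ) ≠ 0 := by exact_mod_cast hsin.ne'
    rw [Real.cot_eq_cos_div_sin]
    push_cast
    field_simp
  rw [hpolar, arg_mul_cos_add_sin_mul_I (inv_pos.2 hsin) ⟨by linarith [hθ.1, pi_pos], hθ.2.le⟩]

theorem injective_arg_ofReal_add_I : Function.Injective fun x : ℝ => arg (x + I) :=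
  Function.LeftInverse.injective (g := Real.cot) cot_arg_ofReal_add_I

theorem range_arg_ofReal_add_I : range (fun x : ℝ => arg (x + I)) = Ioo 0 π :=
  (range_subset_iff.2 arg_ofReal_add_I_mem_Ioo).antisymm
    fun θ hθ => ⟨Real.cot θ, arg_ofReal_cot_add_I hθ⟩

end Complex

namespace Real

theorem sin_add_one_mul_ne_zero_of_sin_mul_eq_zero {a θ : ℝ} (hθ : sin θ ≠ 0)
    (h : sin (a * θ) = 0) : sin ((a + 1) * θ) ≠ 0 := by
  have hcos : cos (a * θ) ≠ 0 := fun hc => by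
    simpa [h, hc] using sin_sq_add_cos_sq (a * θ)
  rw [add_mul, one_mul, sin_add, h, zero_mul, zero_add]
  exact mul_ne_zero hcos hθ

theorem sep_Ioo_sin_nat_succ_mul_eq_zero (n : ℕ) :
    {θ ∈ Ioo 0 π | sin ((n + 1) * θ) = 0} = (fun k : ℕ => k * π / (n + 1)) '' Icc 1 n := by
  have hn : (0 : ℝ) < n + 1 := by positivity
  ext θ
  constructor
  · rintro ⟨⟨hθ0, hθπ⟩, hsin⟩
    obtain ⟨k, hk⟩ := sin_eq_zero_iff.1 hsin
    have hk0 : 0 < k := by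
      have : (0 : ℝ) < k * π := by rw [hk]; positivity
      exact_mod_cast pos_of_mul_pos_left this pi_pos.le
    have hkn : k < n + 1 := by
      have : (k : ℝ) * π < (n + 1) * π := by rw [hk]; gcongr
      exact_mod_cast lt_of_mul_lt_mul_right this pi_pos.le
    refine ⟨k.toNat, ⟨by omega, by omega⟩, ?_⟩
    show ((k.toNat : ℕ) : ℝ) * π / (n + 1) = θ
    rw [show ((k.toNat : ℕ) : ℝ) = k by exact_mod_cast Int.toNat_of_nonneg hk0.le, hk]
    field_simp
  · rintro ⟨k, ⟨hk1, hkn⟩, rfl⟩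
    have hk1' : (1 : ℝ) ≤ k := by exact_mod_cast hk1
    have hkn' : (k : ℝ) < n + 1 := by exact_mod_cast Nat.lt_succ_of_le hkn
    refine ⟨⟨by positivity, ?_⟩, ?_⟩
    · rw [div_lt_iff₀ hn]
      nlinarith [pi_pos]
    · rw [mul_div_cancel₀ _ hn.ne', sin_nat_mul_pi]

theorem ncard_sep_Ioo_sin_nat_succ_mul_eq_zero (n : ℕ) :
    {θ ∈ Ioo 0 π | sin ((n + 1) * θ) = 0}.ncard = n := by
  have hinj : Function.Injective fun k : ℕ => k * π / (n + 1) := fun j k h => by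
    have : (j : ℝ) = k := by
      simpa [pi_ne_zero, Nat.cast_add_one_ne_zero] using h
    exact_mod_cast this
  rw [sep_Ioo_sin_nat_succ_mul_eq_zero, ncard_image_of_injective _ hinj, ncard_Icc_nat]
  omega

end Real

open Complex in
theorem iteratedDeriv_cauchy (n : ℕ) :
    iteratedDeriv n (fun y : ℝ => 1 / (π * (1 + y ^ 2))) =
      fun x : ℝ => (-1) ^ (n + 1) * n.factorial / π * ((((x : ℂ) + I) ^ (n + 1))⁻¹).im := by
  induction n with
  | zero =>
    funext x
    simp only [iteratedDeriv_zero, zero_add, pow_one, Nat.factorial_zero, Nat.cast_one, inv_im,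
      normSq_apply, add_re, add_im, ofReal_re, ofReal_im, I_re, I_im]
    field_simp
    ring
  | succ n ih =>
    funext x
    rw [iteratedDeriv_succ, ih,
      ((hasDerivAt_im_inv_pow_ofReal_add (by simp) (n + 1) x).const_mul _).deriv,
      Nat.factorial_succ]
    push_cast
    ring

open Complex in
theorem iteratedDeriv_cauchy_eq_zero_iff (n : ℕ) (x : ℝ) :
    iteratedDeriv n (fun y : ℝ => 1 / (π * (1 + y ^ 2))) x = 0 ↔
      Real.sin ((n + 1) * arg (x + I)) = 0 := by
  have hx : (x : ℂ) + I ≠ 0 := ofReal_add_ne_zero (by simp) x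
  rw [iteratedDeriv_cauchy]
  dsimp only
  rw [inv_im, im_pow_eq_norm_pow_mul_sin]
  simp [hx, pi_ne_zero, Nat.factorial_ne_zero]

/-- The Cauchy density is bell-shaped: for every `n`, the `n`-th derivative of
`x ↦ 1/(π(1+x²))` has exactly `n` real zeros, all of them simple. -/
theorem cauchy_density_bellShaped (n : ℕ) :
    {x : ℝ | iteratedDeriv n (fun y : ℝ => 1 / (π * (1 + y ^ 2))) x = 0}.Finite ∧
    {x : ℝ | iteratedDeriv n (fun y : ℝ => 1 / (π * (1 + y ^ 2))) x = 0}.ncard = n ∧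
    (∀ x : ℝ, iteratedDeriv n (fun y : ℝ => 1 / (π * (1 + y ^ 2))) x = 0 →
      iteratedDeriv (n + 1) (fun y : ℝ => 1 / (π * (1 + y ^ 2))) x ≠ 0) := by
  have hzeros : {x : ℝ | iteratedDeriv n (fun y : ℝ => 1 / (π * (1 + y ^ 2))) x = 0} =
      (fun x : ℝ => Complex.arg (x + Complex.I)) ⁻¹' {θ ∈ Ioo 0 π | sin ((n + 1) * θ) = 0} := by
    ext x
    simp only [mem_ofPred_eq, mem_preimage, iteratedDeriv_cauchy_eq_zero_iff,
      Complex.arg_ofReal_add_I_mem_Ioo x, true_and]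
  refine ⟨?_, ?_, fun x hx => ?_⟩
  · rw [hzeros, Real.sep_Ioo_sin_nat_succ_mul_eq_zero]
    exact ((finite_Icc 1 n).image _).preimage Complex.injective_arg_ofReal_add_I.injOn
  · rw [hzeros, ncard_preimage_of_injective_subset_range Complex.injective_arg_ofReal_add_I
      (Complex.range_arg_ofReal_add_I ▸ sep_subset _ _),
      Real.ncard_sep_Ioo_sin_nat_succ_mul_eq_zero]
  · rw [iteratedDeriv_cauchy_eq_zero_iff] at hx
    rw [Ne, iteratedDeriv_cauchy_eq_zero_iff]
    obtain ⟨harg0, hargπ⟩ := Complex.arg_ofReal_add_I_mem_Ioo x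
    push_cast
    exact sin_add_one_mul_ne_zero_of_sin_mul_eq_zero (sin_pos_of_pos_of_lt_pi harg0 hargπ).ne' hx
end

section
/- Let f(x) = √(4 − x²) for x ∈ (−2, 2) (the unnormalized semicircle density). Then for every n ≥ 1, the even derivative f^{(2n)} has no zero in (−2,2), while the odd derivative f^{(2n−1)} vanishes exactly once in (−2,2), namely at x = 0. In particular the semicircle density is not bell-shaped. -/
/-!
Induction gives `f⁽ᵏ⁾(x) = Q_k(x) (c - x²)^(1/2 - k)` for `f(x) = √(c - x²)`, where
`Q_0 = 1` and `Q_{k+1} = (c - X²) Q_k' + (2k - 1) X Q_k`. For `c > 0` and `k ≥ 1` the recursion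
on coefficients shows that `Q_k` has the parity of `k`, only nonpositive coefficients, and a
negative lowest one. So an even `Q_k` is negative everywhere, while an odd `Q_k` is negative on
`(0, ∞)`, hence positive on `(-∞, 0)`, and vanishes only at `0`.
-/

open Polynomial

theorem Polynomial.eval_le_coeff_mul_pow {p : ℝ[X]} (hp : ∀ j, p.coeff j ≤ 0) {x : ℝ}
    (hx : 0 ≤ x) (i : ℕ) : p.eval x ≤ p.coeff i * x ^ i := by
  have hi : i ∈ Finset.range (max p.natDegree i + 1) := Finset.mem_range.2 (by omega)
  rw [eval_eq_sum_range' (n := max p.natDegree i + 1) (by omega), ← Finset.add_sum_erase _ _ hi]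
  have hrest : ∑ j ∈ (Finset.range (max p.natDegree i + 1)).erase i, p.coeff j * x ^ j ≤ 0 :=
    Finset.sum_nonpos fun j _ => mul_nonpos_of_nonpos_of_nonneg (hp j) (pow_nonneg hx j)
  linarith

theorem Polynomial.eval_neg_eq_neg_one_pow_mul_of_coeff {p : ℝ[X]} {k : ℕ}
    (hp : ∀ j, j % 2 ≠ k % 2 → p.coeff j = 0) (x : ℝ) :
    p.eval (-x) = (-1) ^ k * p.eval x := by
  rw [eval_eq_sum_range, eval_eq_sum_range, Finset.mul_sum]
  refine Finset.sum_congr rfl fun j _ => ?_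
  by_cases hj : j % 2 = k % 2
  · rw [neg_pow, neg_one_pow_eq_pow_mod_two (n := j), hj, ← neg_one_pow_eq_pow_mod_two]; ring
  · simp [hp j hj]

noncomputable def semicirclePoly (c : ℝ) : ℕ → ℝ[X]
  | 0 => 1
  | k + 1 => (C c - X ^ 2) * derivative (semicirclePoly c k)
      + C (2 * (k : ℝ) - 1) * X * semicirclePoly c k

namespace semicirclePoly

variable (c : ℝ)

theorem one : semicirclePoly c 1 = -X := by
  simp [semicirclePoly]

theorem coeff_succ_zero (k : ℕ) :
    (semicirclePoly c (k + 1)).coeff 0 = c * (semicirclePoly c k).coeff 1 := by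
  simp [semicirclePoly, coeff_derivative, mul_comm]

theorem coeff_succ_succ (k m : ℕ) :
    (semicirclePoly c (k + 1)).coeff (m + 1) =
      c * (m + 2) * (semicirclePoly c k).coeff (m + 2)
        + (2 * k - 1 - m) * (semicirclePoly c k).coeff m := by
  have hX2 : (X ^ 2 * derivative (semicirclePoly c k)).coeff (m + 1)
      = m * (semicirclePoly c k).coeff m := by
    rcases m with _ | m
    · simp [pow_two, mul_assoc, coeff_X_mul]
    · rw [show m + 1 + 1 = m + 2 by rfl, coeff_X_pow_mul, coeff_derivative]
      push_cast; ring
  simp only [semicirclePoly, coeff_add, sub_mul, coeff_sub, coeff_C_mul, hX2, mul_assoc,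
    coeff_X_mul, coeff_derivative]
  push_cast; ring

theorem natDegree_le (k : ℕ) : (semicirclePoly c k).natDegree ≤ k := by
  induction k with
  | zero => simp [semicirclePoly]
  | succ k ih =>
    rw [natDegree_le_iff_coeff_eq_zero]
    rintro (_ | m) hm
    · omega
    · rw [coeff_succ_succ, coeff_eq_zero_of_natDegree_lt (by omega : _ < m + 2),
        coeff_eq_zero_of_natDegree_lt (by omega : _ < m)]
      ring

theorem coeff_eq_zero_of_mod_two_ne (k : ℕ) :
    ∀ j, j % 2 ≠ k % 2 → (semicirclePoly c k).coeff j = 0 := by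
  induction k with
  | zero =>
    rintro (_ | j) hj
    · simp at hj
    · simp [semicirclePoly, coeff_one]
  | succ k ih =>
    rintro (_ | m) hm
    · rw [coeff_succ_zero, ih 1 (by omega), mul_zero]
    · rw [coeff_succ_succ, ih (m + 2) (by omega), ih m (by omega)]
      ring

variable {c}

theorem coeff_nonpos (hc : 0 ≤ c) {k : ℕ} (hk : 1 ≤ k) :
    ∀ j, (semicirclePoly c k).coeff j ≤ 0 := by
  induction k, hk using Nat.le_induction with
  | base =>
    intro j
    rw [one, coeff_neg, coeff_X]
    split_ifs <;> norm_num
  | succ k hk ih =>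
    rintro (_ | m)
    · rw [coeff_succ_zero]
      exact mul_nonpos_of_nonneg_of_nonpos hc (ih 1)
    · rw [coeff_succ_succ]
      have hhigh : c * (m + 2) * (semicirclePoly c k).coeff (m + 2) ≤ 0 :=
        mul_nonpos_of_nonneg_of_nonpos (by positivity) (ih _)
      have hlow : (2 * k - 1 - m) * (semicirclePoly c k).coeff m ≤ 0 := by
        by_cases hm : m ≤ k
        · have : (m : ℝ) ≤ k := by exact_mod_cast hm
          have : (1 : ℝ) ≤ k := by exact_mod_cast hk
          exact mul_nonpos_of_nonneg_of_nonpos (by linarith) (ih m)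
        · rw [coeff_eq_zero_of_natDegree_lt ((natDegree_le c k).trans_lt (by omega)), mul_zero]
      linarith

theorem coeff_mod_two_neg (hc : 0 < c) {k : ℕ} (hk : 1 ≤ k) :
    (semicirclePoly c k).coeff (k % 2) < 0 := by
  induction k, hk using Nat.le_induction with
  | base => simp [one]
  | succ k hk ih =>
    rcases Nat.mod_two_eq_zero_or_one k with hk2 | hk2
    · rw [show (k + 1) % 2 = 0 + 1 by omega, coeff_succ_succ]
      rw [hk2] at ih
      have : (1 : ℝ) ≤ k := by exact_mod_cast hk
      have hhigh : c * ((0 : ℕ) + 2) * (semicirclePoly c k).coeff (0 + 2) ≤ 0 :=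
        mul_nonpos_of_nonneg_of_nonpos (by positivity) (coeff_nonpos hc.le hk _)
      have hlow : (2 * k - 1 - (0 : ℕ)) * (semicirclePoly c k).coeff 0 < 0 :=
        mul_neg_of_pos_of_neg (by push_cast; linarith) ih
      linarith
    · rw [show (k + 1) % 2 = 0 by omega, coeff_succ_zero]
      rw [hk2] at ih
      exact mul_neg_of_pos_of_neg hc ih

theorem eval_neg_eq_neg_one_pow_mul (k : ℕ) (x : ℝ) :
    (semicirclePoly c k).eval (-x) = (-1) ^ k * (semicirclePoly c k).eval x :=
  eval_neg_eq_neg_one_pow_mul_of_coeff (coeff_eq_zero_of_mod_two_ne c k) x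

theorem eval_neg_of_even (hc : 0 < c) {k : ℕ} (hk : Even k) (hk0 : k ≠ 0) (x : ℝ) :
    (semicirclePoly c k).eval x < 0 := by
  have heven : (semicirclePoly c k).eval |x| = (semicirclePoly c k).eval x := by
    rcases abs_choice x with h | h
    · rw [h]
    · rw [h, eval_neg_eq_neg_one_pow_mul, hk.neg_one_pow, one_mul]
  have hk2 : k % 2 = 0 := Nat.even_iff.mp hk
  have hlow := coeff_mod_two_neg hc (Nat.one_le_iff_ne_zero.mpr hk0)
  rw [hk2] at hlow
  calc (semicirclePoly c k).eval x = (semicirclePoly c k).eval |x| := heven.symm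
    _ ≤ (semicirclePoly c k).coeff 0 * |x| ^ 0 :=
      eval_le_coeff_mul_pow (coeff_nonpos hc.le (by omega)) (abs_nonneg x) 0
    _ < 0 := by simpa using hlow

theorem eval_neg_of_odd_of_pos (hc : 0 < c) {k : ℕ} (hk : Odd k) {x : ℝ} (hx : 0 < x) :
    (semicirclePoly c k).eval x < 0 := by
  have hk2 : k % 2 = 1 := Nat.odd_iff.mp hk
  have hlow := coeff_mod_two_neg hc (by omega : 1 ≤ k)
  rw [hk2] at hlow
  calc (semicirclePoly c k).eval x ≤ (semicirclePoly c k).coeff 1 * x ^ 1 :=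
      eval_le_coeff_mul_pow (coeff_nonpos hc.le (by omega)) hx.le 1
    _ < 0 := by simpa using mul_neg_of_neg_of_pos hlow hx

theorem eval_eq_zero_iff_of_odd (hc : 0 < c) {k : ℕ} (hk : Odd k) (x : ℝ) :
    (semicirclePoly c k).eval x = 0 ↔ x = 0 := by
  refine ⟨fun h => ?_, fun h => ?_⟩
  · by_contra hx
    rcases lt_or_gt_of_ne hx with hneg | hpos
    · have := eval_neg_of_odd_of_pos hc hk (neg_pos.mpr hneg)
      rw [eval_neg_eq_neg_one_pow_mul, hk.neg_one_pow, h] at this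
      norm_num at this
    · exact (eval_neg_of_odd_of_pos hc hk hpos).ne h
  · have := eval_neg_eq_neg_one_pow_mul (c := c) k 0
    rw [neg_zero, hk.neg_one_pow, ← h] at this
    linarith

theorem hasDerivAt_eval_mul_rpow (k : ℕ) {x : ℝ} (hx : x ^ 2 < c) :
    HasDerivAt (fun y => (semicirclePoly c k).eval y * (c - y ^ 2) ^ ((1 : ℝ) / 2 - k))
      ((semicirclePoly c (k + 1)).eval x * (c - x ^ 2) ^ ((1 : ℝ) / 2 - (k + 1 : ℕ))) x := by
  have hpos : 0 < c - x ^ 2 := sub_pos.mpr hx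
  have hbase : HasDerivAt (fun y : ℝ => c - y ^ 2) (-(2 * x)) x := by
    simpa using (hasDerivAt_pow 2 x).const_sub c
  have hrpow := (hbase.rpow_const (p := (1 : ℝ) / 2 - k) (Or.inl hpos.ne'))
  refine (((semicirclePoly c k).hasDerivAt x).mul hrpow).congr_deriv ?_
  have hsplit : (c - x ^ 2) ^ ((1 : ℝ) / 2 - k)
      = (c - x ^ 2) ^ ((1 : ℝ) / 2 - k - 1) * (c - x ^ 2) := by
    rw [← Real.rpow_add_one hpos.ne']; ring_nf
  rw [hsplit, show (1 : ℝ) / 2 - (k + 1 : ℕ) = 1 / 2 - k - 1 by push_cast; ring]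
  simp only [semicirclePoly, eval_add, eval_mul, eval_sub, eval_C, eval_pow, eval_X]
  ring

end semicirclePoly

theorem iteratedDeriv_sqrt_sub_sq (c : ℝ) (k : ℕ) {x : ℝ} (hx : x ^ 2 < c) :
    iteratedDeriv k (fun y => √(c - y ^ 2)) x
      = (semicirclePoly c k).eval x * (c - x ^ 2) ^ ((1 : ℝ) / 2 - k) := by
  induction k generalizing x with
  | zero => simp [semicirclePoly, Real.sqrt_eq_rpow]
  | succ k ih =>
    have hnhds : {y : ℝ | y ^ 2 < c} ∈ nhds x :=
      (isOpen_lt (continuous_pow 2) continuous_const).mem_nhds hx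
    have heq : iteratedDeriv k (fun y => √(c - y ^ 2)) =ᶠ[nhds x]
        fun y => (semicirclePoly c k).eval y * (c - y ^ 2) ^ ((1 : ℝ) / 2 - k) :=
      Filter.eventually_of_mem hnhds fun y hy => ih hy
    rw [iteratedDeriv_succ, heq.deriv_eq, (semicirclePoly.hasDerivAt_eval_mul_rpow k hx).deriv]

/-- For the semicircle function `f(x) = √(4−x²)` on `(−2,2)` and every `n ≥ 1`,
the even derivative `f^{(2n)}` never vanishes on `(−2,2)` while the odd
derivative `f^{(2n−1)}` vanishes exactly at `x = 0`. -/
theorem semicircle_derivative_zeros (n : ℕ) (hn : 1 ≤ n) :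
    (∀ x ∈ Set.Ioo (-2:ℝ) 2,
      iteratedDeriv (2 * n) (fun y : ℝ => Real.sqrt (4 - y ^ 2)) x ≠ 0) ∧
    (∀ x ∈ Set.Ioo (-2:ℝ) 2,
      (iteratedDeriv (2 * n - 1) (fun y : ℝ => Real.sqrt (4 - y ^ 2)) x = 0 ↔
        x = 0)) := by
  have hsq {x : ℝ} (hx : x ∈ Set.Ioo (-2 : ℝ) 2) : x ^ 2 < 4 := by nlinarith [hx.1, hx.2]
  have hrpow {x : ℝ} (hx : x ∈ Set.Ioo (-2 : ℝ) 2) (k : ℕ) :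
      (4 - x ^ 2) ^ ((1 : ℝ) / 2 - k) ≠ 0 :=
    (Real.rpow_pos_of_pos (sub_pos.mpr (hsq hx)) _).ne'
  refine ⟨fun x hx => ?_, fun x hx => ?_⟩
  · rw [iteratedDeriv_sqrt_sub_sq 4 _ (hsq hx)]
    exact mul_ne_zero (semicirclePoly.eval_neg_of_even four_pos (even_two_mul n) (by omega) x).ne
      (hrpow hx _)
  · rw [iteratedDeriv_sqrt_sub_sq 4 _ (hsq hx), mul_eq_zero, or_iff_left (hrpow hx _)]
    have hodd : Odd (2 * n - 1) := Nat.Even.sub_odd (by omega) (even_two_mul n) odd_one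
    exact semicirclePoly.eval_eq_zero_iff_of_odd four_pos hodd x
end
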